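/- arXiv:1507.08436 — 8 statements merged into one kernel-verified Lean document; each statement's English description precedes it below -/
import Mathlib

section
/- (Proposition 1, Equivalence.) Let ρ ∈ ℝ and let g be continuous and strictly positive on [A₀,∞) for some constant A₀. Then g is log-regularly varying at ∞ with index ρ if and only if there exist a constant A > 1 and a function s that is log-slowly varying at ∞ such that for all z ≥ A one has g(z) = (log z)^{−ρ} s(z). -/
/-!
Since `log (z ^ ν) = ν log z`, multiplying `g` by `(log z) ^ σ` multiplies the ratio
`g (z ^ ν) / g z` by exactly `ν ^ σ` once `z > 1`; so it shifts the index of log-regular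
variation by `-σ`. The factorisation `g = (log z) ^ (-ρ) s` is therefore the same thing as
`s = (log z) ^ ρ g` being log-slowly varying, up to changing `g` on a bounded set, which the
definition does not see because `z ≥ A ^ τ` forces `z ^ ν ≥ A`.
-/

open Real Set

/-- A function `g` is log-regularly varying at `∞` with index `ρ`:
for every `ε > 0` and `τ ≥ 1` there is `A(ε,τ) > 0` such that
`z ≥ A` and `1/τ ≤ ν ≤ τ` imply `|ν^ρ g(z^ν)/g(z) − 1| < ε`. -/
def LogRegVarying (g : ℝ → ℝ) (ρ : ℝ) : Prop :=
  ∀ ε : ℝ, 0 < ε → ∀ τ : ℝ, 1 ≤ τ →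
    ∃ A : ℝ, 0 < A ∧ ∀ z : ℝ, A ≤ z → ∀ ν : ℝ, 1 / τ ≤ ν → ν ≤ τ →
      |ν ^ ρ * g (z ^ ν) / g z - 1| < ε

lemma log_rpow_rpow {z : ℝ} (hz : 1 < z) {ν : ℝ} (hν : 0 < ν) (σ : ℝ) :
    log (z ^ ν) ^ σ = ν ^ σ * log z ^ σ := by
  rw [log_rpow (by linarith), mul_rpow hν.le (log_pos hz).le]

namespace LogRegVarying

variable {f g : ℝ → ℝ} {ρ : ℝ}

lemma congr (hf : LogRegVarying f ρ) {A : ℝ} (hfg : ∀ z, A ≤ z → f z = g z) :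
    LogRegVarying g ρ := by
  intro ε hε τ hτ
  obtain ⟨A₁, hA₁, hf⟩ := hf ε hε τ hτ
  set B := max A 1
  refine ⟨max A₁ (B ^ τ), lt_max_of_lt_left hA₁, fun z hz ν hν₁ hν₂ => ?_⟩
  have hτ₀ : 0 < τ := by linarith
  have hB : 1 ≤ B := le_max_right _ _
  have hBz : B ^ τ ≤ z := le_of_max_le_right hz
  have hzB : B ≤ z := (self_le_rpow_of_one_le hB hτ).trans hBz
  have hz₁ : 1 ≤ z := hB.trans hzB
  have hzνB : B ≤ z ^ ν :=
    calc B = (B ^ τ) ^ (1 / τ) := by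
          rw [← rpow_mul (by linarith), mul_one_div_cancel hτ₀.ne', rpow_one]
      _ ≤ z ^ (1 / τ) := rpow_le_rpow (by positivity) hBz (by positivity)
      _ ≤ z ^ ν := rpow_le_rpow_of_exponent_le hz₁ hν₁
  rw [← hfg z (le_of_max_le_left hzB), ← hfg _ (le_of_max_le_left hzνB)]
  exact hf z (le_of_max_le_left hz) ν hν₁ hν₂

lemma log_rpow_mul (hg : LogRegVarying g ρ) (σ : ℝ) :
    LogRegVarying (fun z => log z ^ σ * g z) (ρ - σ) := by
  intro ε hε τ hτ
  obtain ⟨A₁, hA₁, hg⟩ := hg ε hε τ hτ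
  refine ⟨max A₁ 2, lt_max_of_lt_left hA₁, fun z hz ν hν₁ hν₂ => ?_⟩
  have hz₁ : 1 < z := by linarith [le_max_right A₁ 2]
  have hν : 0 < ν := lt_of_lt_of_le (by positivity) hν₁
  have hlog : log z ^ σ ≠ 0 := (rpow_pos_of_pos (log_pos hz₁) σ).ne'
  have hratio : ν ^ (ρ - σ) * (log (z ^ ν) ^ σ * g (z ^ ν)) / (log z ^ σ * g z)
      = ν ^ ρ * g (z ^ ν) / g z := by
    rw [log_rpow_rpow hz₁ hν, rpow_sub hν]
    field_simp
  rw [hratio]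
  exact hg z (le_of_max_le_left hz) ν hν₁ hν₂

end LogRegVarying

theorem statement0_general (ρ : ℝ) (g : ℝ → ℝ) :
    LogRegVarying g ρ ↔
      ∃ A : ℝ, 1 < A ∧ ∃ s : ℝ → ℝ, LogRegVarying s 0 ∧
        ∀ z : ℝ, A ≤ z → g z = (Real.log z) ^ (-ρ) * s z := by
  constructor
  · intro hg
    refine ⟨2, one_lt_two, fun z => log z ^ ρ * g z, by simpa using hg.log_rpow_mul ρ,
      fun z hz => ?_⟩
    have hlog : 0 < log z := log_pos (by linarith)
    rw [rpow_neg hlog.le, inv_mul_cancel_left₀ (rpow_pos_of_pos hlog ρ).ne']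
  · rintro ⟨A, -, s, hs, hgs⟩
    simpa using (hs.log_rpow_mul (-ρ)).congr fun z hz => (hgs z hz).symm

/-- Proposition 1 (Equivalence): `g ∈ L_ρ(∞)` iff there are `A > 1` and a
log-slowly varying `s` with `g(z) = (log z)^{-ρ} s(z)` for all `z ≥ A`. -/
theorem statement0 (ρ : ℝ) (g : ℝ → ℝ) (A₀ : ℝ)
    (hg_cont : ContinuousOn g (Set.Ici A₀)) (hg_pos : ∀ z ∈ Set.Ici A₀, 0 < g z) :
    LogRegVarying g ρ ↔
      ∃ A : ℝ, 1 < A ∧ ∃ s : ℝ → ℝ, LogRegVarying s 0 ∧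
        ∀ z : ℝ, A ≤ z → g z = (Real.log z) ^ (-ρ) * s z :=
  statement0_general ρ g
end

section
/- (Proposition 3, Integrability, cases ρ ≠ 1.) Let g be log-regularly varying at ∞ with index ρ. If ρ > 1, then there exists a constant A > 0 such that z ↦ (1/z)g(z) is integrable on [A,∞). If ρ < 1, then for every A > 0 the function z ↦ (1/z)g(z) is not integrable on [A,∞). -/
/-!
With `G x = g (exp x)` the hypothesis says that `G` is regularly varying with index `-ρ`, and the
substitution `z = exp x` turns `∫ g z / z` into `∫ G x`. Fix `p` strictly between `1` and `ρ`.
The ratio bound at `ν = 2` makes `x ^ p * G x` monotone along the doublings `x ↦ 2 x`, and the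
bound for `ν ∈ [1, 2]` controls it in between (Potter bounds). So `G x = O(x ^ (-p))` with `p > 1`
when `ρ > 1`, while `G x ≫ x ^ (-p)` with `p < 1` when `ρ < 1`; comparison with `∫ x ^ (-p)`
decides integrability.
-/

open Real Set MeasureTheory

open Filter

theorem le_of_le_on_Icc_of_map_two_mul_le {H : ℝ → ℝ} {x₀ M : ℝ} (hx₀ : 0 < x₀)
    (hbase : ∀ x ∈ Icc x₀ (2 * x₀), H x ≤ M) (hstep : ∀ x ≥ x₀, H (2 * x) ≤ H x) :
    ∀ x ≥ x₀, H x ≤ M := by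
  have hdyadic : ∀ n : ℕ, ∀ x ∈ Icc x₀ (2 ^ n * x₀), H x ≤ M := by
    intro n
    induction n with
    | zero => exact fun x hx => hbase x ⟨hx.1, by linarith [hx.2, pow_zero (2 : ℝ)]⟩
    | succ n ih =>
      intro x hx
      rcases le_or_gt x (2 * x₀) with hx2 | hx2
      · exact hbase x ⟨hx.1, hx2⟩
      · calc H x = H (2 * (x / 2)) := by ring_nf
          _ ≤ H (x / 2) := hstep _ (by linarith)
          _ ≤ M := ih _ ⟨by linarith, by
            have hx' := hx.2
            rw [pow_succ, mul_comm _ (2 : ℝ), mul_assoc] at hx'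
            linarith⟩
  intro x hx
  obtain ⟨n, hn⟩ := pow_unbounded_of_one_lt (x / x₀) one_lt_two
  exact hdyadic n x ⟨hx, ((div_lt_iff₀ hx₀).1 hn).le⟩

theorem potter_upper {G : ℝ → ℝ} {ρ p x₀ : ℝ} (hx₀ : 0 < x₀) (hp : p ≤ ρ) (hG : 0 ≤ G x₀)
    (hratio : ∀ x ≥ x₀, ∀ ν ∈ Icc (1 : ℝ) 2, ν ^ ρ * G (ν * x) ≤ 2 ^ (ρ - p) * G x) :
    ∀ x ≥ x₀, x ^ p * G x ≤ 2 ^ (ρ - p) * (x₀ ^ p * G x₀) := by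
  have hscale : ∀ x ≥ x₀, ∀ ν ∈ Icc (1 : ℝ) 2,
      (ν * x) ^ p * G (ν * x) ≤ ν ^ (p - ρ) * (2 ^ (ρ - p) * (x ^ p * G x)) := by
    intro x hx ν hν
    have hν0 : 0 < ν := by linarith [hν.1]
    calc (ν * x) ^ p * G (ν * x) = ν ^ (p - ρ) * x ^ p * (ν ^ ρ * G (ν * x)) := by
          rw [mul_rpow hν0.le (by linarith), rpow_sub hν0]
          field_simp
      _ ≤ ν ^ (p - ρ) * x ^ p * (2 ^ (ρ - p) * G x) :=
          mul_le_mul_of_nonneg_left (hratio x hx ν hν)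
            (mul_nonneg (rpow_nonneg hν0.le _) (rpow_nonneg (by linarith) _))
      _ = ν ^ (p - ρ) * (2 ^ (ρ - p) * (x ^ p * G x)) := by ring
  refine le_of_le_on_Icc_of_map_two_mul_le hx₀ (fun x hx => ?_) (fun x hx => ?_)
  · have hν : x / x₀ ∈ Icc (1 : ℝ) 2 :=
      ⟨(one_le_div hx₀).2 hx.1, (div_le_iff₀ hx₀).2 hx.2⟩
    calc x ^ p * G x = (x / x₀ * x₀) ^ p * G (x / x₀ * x₀) := by rw [div_mul_cancel₀ _ hx₀.ne']
      _ ≤ (x / x₀) ^ (p - ρ) * (2 ^ (ρ - p) * (x₀ ^ p * G x₀)) := hscale x₀ le_rfl _ hν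
      _ ≤ 1 * (2 ^ (ρ - p) * (x₀ ^ p * G x₀)) := by
          gcongr
          exact rpow_le_one_of_one_le_of_nonpos hν.1 (by linarith)
      _ = 2 ^ (ρ - p) * (x₀ ^ p * G x₀) := one_mul _
  · calc (2 * x) ^ p * G (2 * x) ≤ 2 ^ (p - ρ) * (2 ^ (ρ - p) * (x ^ p * G x)) :=
          hscale x hx 2 ⟨one_le_two, le_rfl⟩
      _ = x ^ p * G x := by
          rw [← mul_assoc, ← rpow_add two_pos, sub_add_sub_cancel, sub_self, rpow_zero, one_mul]

theorem potter_lower {G : ℝ → ℝ} {ρ p x₀ : ℝ} (hx₀ : 0 < x₀) (hp : ρ ≤ p) (hG : 0 ≤ G x₀)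
    (hratio : ∀ x ≥ x₀, ∀ ν ∈ Icc (1 : ℝ) 2, 2 ^ (ρ - p) * G x ≤ ν ^ ρ * G (ν * x)) :
    ∀ x ≥ x₀, 2 ^ (ρ - p) * (x₀ ^ p * G x₀) ≤ x ^ p * G x := by
  have hscale : ∀ x ≥ x₀, ∀ ν ∈ Icc (1 : ℝ) 2,
      ν ^ (p - ρ) * (2 ^ (ρ - p) * (x ^ p * G x)) ≤ (ν * x) ^ p * G (ν * x) := by
    intro x hx ν hν
    have hν0 : 0 < ν := by linarith [hν.1]
    calc ν ^ (p - ρ) * (2 ^ (ρ - p) * (x ^ p * G x))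
        = ν ^ (p - ρ) * x ^ p * (2 ^ (ρ - p) * G x) := by ring
      _ ≤ ν ^ (p - ρ) * x ^ p * (ν ^ ρ * G (ν * x)) :=
          mul_le_mul_of_nonneg_left (hratio x hx ν hν)
            (mul_nonneg (rpow_nonneg hν0.le _) (rpow_nonneg (by linarith) _))
      _ = (ν * x) ^ p * G (ν * x) := by
          rw [mul_rpow hν0.le (by linarith), rpow_sub hν0]
          field_simp
  intro x hx
  refine neg_le_neg_iff.1 <|
    le_of_le_on_Icc_of_map_two_mul_le (H := fun x => -(x ^ p * G x)) hx₀ (fun x hx => ?_)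
      (fun x hx => ?_) x hx
  · have hν : x / x₀ ∈ Icc (1 : ℝ) 2 :=
      ⟨(one_le_div hx₀).2 hx.1, (div_le_iff₀ hx₀).2 hx.2⟩
    refine neg_le_neg ?_
    calc 2 ^ (ρ - p) * (x₀ ^ p * G x₀) = 1 * (2 ^ (ρ - p) * (x₀ ^ p * G x₀)) := (one_mul _).symm
      _ ≤ (x / x₀) ^ (p - ρ) * (2 ^ (ρ - p) * (x₀ ^ p * G x₀)) := by
          gcongr
          exact one_le_rpow hν.1 (by linarith)
      _ ≤ (x / x₀ * x₀) ^ p * G (x / x₀ * x₀) := hscale x₀ le_rfl _ hν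
      _ = x ^ p * G x := by rw [div_mul_cancel₀ _ hx₀.ne']
  · refine neg_le_neg ?_
    calc x ^ p * G x = 2 ^ (p - ρ) * (2 ^ (ρ - p) * (x ^ p * G x)) := by
          rw [← mul_assoc, ← rpow_add two_pos, sub_add_sub_cancel, sub_self, rpow_zero, one_mul]
      _ ≤ (2 * x) ^ p * G (2 * x) := hscale x hx 2 ⟨one_le_two, le_rfl⟩

theorem integrableOn_Ici_exp_iff (f : ℝ → ℝ) (a : ℝ) :
    IntegrableOn (fun z => 1 / z * f z) (Ici (exp a)) ↔
      IntegrableOn (fun x => f (exp x)) (Ici a) := by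
  rw [← image_exp_Ici, integrableOn_image_iff_integrableOn_abs_deriv_smul measurableSet_Ici
    (fun x _ => (hasDerivAt_exp x).hasDerivWithinAt) exp_injective.injOn]
  refine integrableOn_congr_fun (fun x _ => ?_) measurableSet_Ici
  simp [abs_of_pos (exp_pos x), (exp_pos x).ne']

namespace LogRegVarying

variable {g : ℝ → ℝ} {ρ A₀ : ℝ}

theorem eventually_pos_comp_exp (hg_pos : ∀ z ∈ Ici A₀, 0 < g z) :
    ∀ᶠ x in atTop, 0 < g (exp x) :=
  (tendsto_exp_atTop.eventually (eventually_ge_atTop A₀)).mono fun _ hx => hg_pos _ hx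

theorem eventually_ratio_comp_exp (hg : LogRegVarying g ρ) (hg_pos : ∀ z ∈ Ici A₀, 0 < g z)
    {ε : ℝ} (hε : 0 < ε) :
    ∀ᶠ x in atTop, ∀ ν ∈ Icc (1 : ℝ) 2,
      (1 - ε) * g (exp x) < ν ^ ρ * g (exp (ν * x)) ∧
        ν ^ ρ * g (exp (ν * x)) < (1 + ε) * g (exp x) := by
  obtain ⟨A, -, hA⟩ := hg ε hε 2 one_le_two
  filter_upwards [eventually_ge_atTop A, eventually_pos_comp_exp hg_pos] with x hx hpos ν hν
  have h := hA (exp x) (by linarith [add_one_le_exp x]) ν (by linarith [hν.1]) hν.2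
  rw [← exp_mul, mul_comm x, abs_sub_lt_iff, sub_lt_iff_lt_add', div_lt_iff₀ hpos,
    sub_lt_comm, lt_div_iff₀ hpos] at h
  exact ⟨h.2, h.1⟩

theorem exists_eventually_le_rpow (hg : LogRegVarying g ρ) (hg_pos : ∀ z ∈ Ici A₀, 0 < g z)
    {p : ℝ} (hp : p < ρ) : ∃ C, ∀ᶠ x in atTop, g (exp x) ≤ C * x ^ (-p) := by
  have hε : 0 < (2 : ℝ) ^ (ρ - p) - 1 := sub_pos.2 (one_lt_rpow one_lt_two (sub_pos.2 hp))
  obtain ⟨x₀, hx₀⟩ := eventually_atTop.1 <| (eventually_ratio_comp_exp hg hg_pos hε).and <|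
    (eventually_pos_comp_exp hg_pos).and (eventually_gt_atTop 0)
  obtain ⟨-, hgx₀, hx₀pos⟩ := hx₀ x₀ le_rfl
  have hpotter := potter_upper (G := fun x => g (exp x)) hx₀pos hp.le hgx₀.le
    fun x hx ν hν => by simpa using ((hx₀ x hx).1 ν hν).2.le
  refine ⟨2 ^ (ρ - p) * (x₀ ^ p * g (exp x₀)), eventually_atTop.2 ⟨x₀, fun x hx => ?_⟩⟩
  have hx0 : 0 < x := (hx₀ x hx).2.2
  rw [rpow_neg hx0.le, ← div_eq_mul_inv, le_div_iff₀ (rpow_pos_of_pos hx0 p), mul_comm]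
  exact hpotter x hx

theorem exists_eventually_rpow_le (hg : LogRegVarying g ρ) (hg_pos : ∀ z ∈ Ici A₀, 0 < g z)
    {p : ℝ} (hp : ρ < p) : ∃ c, 0 < c ∧ ∀ᶠ x in atTop, c * x ^ (-p) ≤ g (exp x) := by
  have hε : 0 < 1 - (2 : ℝ) ^ (ρ - p) :=
    sub_pos.2 (rpow_lt_one_of_one_lt_of_neg one_lt_two (sub_neg.2 hp))
  obtain ⟨x₀, hx₀⟩ := eventually_atTop.1 <| (eventually_ratio_comp_exp hg hg_pos hε).and <|
    (eventually_pos_comp_exp hg_pos).and (eventually_gt_atTop 0)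
  obtain ⟨-, hgx₀, hx₀pos⟩ := hx₀ x₀ le_rfl
  have hpotter := potter_lower (G := fun x => g (exp x)) hx₀pos hp.le hgx₀.le
    fun x hx ν hν => by simpa using ((hx₀ x hx).1 ν hν).1.le
  refine ⟨2 ^ (ρ - p) * (x₀ ^ p * g (exp x₀)),
    mul_pos (rpow_pos_of_pos two_pos _) (mul_pos (rpow_pos_of_pos hx₀pos _) hgx₀),
    eventually_atTop.2 ⟨x₀, fun x hx => ?_⟩⟩
  have hx0 : 0 < x := (hx₀ x hx).2.2
  rw [rpow_neg hx0.le, ← div_eq_mul_inv, div_le_iff₀ (rpow_pos_of_pos hx0 p), mul_comm (g _)]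
  exact hpotter x hx

theorem exists_integrableOn_Ici (hg : LogRegVarying g ρ) (hg_cont : ContinuousOn g (Ici A₀))
    (hg_pos : ∀ z ∈ Ici A₀, 0 < g z) (hρ : 1 < ρ) :
    ∃ A, 0 < A ∧ IntegrableOn (fun z => 1 / z * g z) (Ici A) := by
  obtain ⟨p, hp, hpρ⟩ := exists_between hρ
  obtain ⟨C, hC⟩ := hg.exists_eventually_le_rpow hg_pos hpρ
  obtain ⟨x₀, hx₀⟩ := eventually_atTop.1 <| (hC.and (eventually_pos_comp_exp hg_pos)).and <|
    (tendsto_exp_atTop.eventually (eventually_ge_atTop A₀)).and (eventually_gt_atTop 0)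
  refine ⟨exp x₀, exp_pos x₀, (integrableOn_Ici_exp_iff g x₀).2 ?_⟩
  have hdom : IntegrableOn (fun x => C * x ^ (-p)) (Ici x₀) :=
    (integrableOn_Ici_iff_integrableOn_Ioi).2 <|
      (integrableOn_Ioi_rpow_of_lt (by linarith) (hx₀ x₀ le_rfl).2.2).const_mul C
  refine hdom.mono' ?_ (ae_restrict_of_forall_mem measurableSet_Ici fun x hx => ?_)
  · exact (hg_cont.comp continuous_exp.continuousOn fun x hx => (hx₀ x hx).2.1).aestronglyMeasurable
      measurableSet_Ici
  · rw [norm_of_nonneg (hx₀ x hx).1.2.le]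
    exact (hx₀ x hx).1.1

theorem not_integrableOn_Ici (hg : LogRegVarying g ρ) (hg_pos : ∀ z ∈ Ici A₀, 0 < g z)
    (hρ : ρ < 1) {A : ℝ} (hA : 0 < A) : ¬ IntegrableOn (fun z => 1 / z * g z) (Ici A) := by
  obtain ⟨p, hρp, hp⟩ := exists_between hρ
  obtain ⟨c, hc, hbound⟩ := hg.exists_eventually_rpow_le hg_pos hρp
  obtain ⟨x₀, hx₀⟩ := eventually_atTop.1 <|
    (hbound.and (eventually_ge_atTop (log A))).and (eventually_gt_atTop 0)
  obtain ⟨⟨-, hlogA⟩, hx₀pos⟩ := hx₀ x₀ le_rfl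
  intro hint
  have hG : IntegrableOn (fun x => g (exp x)) (Ici x₀) :=
    (integrableOn_Ici_exp_iff g x₀).1 <|
      hint.mono_set (Ici_subset_Ici.2 ((log_le_iff_le_exp hA).1 hlogA))
  have hrpow : IntegrableOn (fun x => x ^ (-p)) (Ioi x₀) := by
    refine ((hG.mono_set Ioi_subset_Ici_self).const_mul c⁻¹).mono' ?_
      (ae_restrict_of_forall_mem measurableSet_Ioi fun x hx => ?_)
    · exact (continuousOn_id.rpow_const fun x hx =>
        Or.inl (hx₀pos.trans hx).ne').aestronglyMeasurable measurableSet_Ioi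
    · rw [norm_of_nonneg (rpow_nonneg (hx₀pos.trans hx).le _), le_inv_mul_iff₀ hc]
      exact (hx₀ x hx.le).1.1
  linarith [(integrableOn_Ioi_rpow_iff hx₀pos).1 hrpow]

end LogRegVarying

/-- Proposition 3 (Integrability, cases ρ ≠ 1): if `g ∈ L_ρ(∞)` with `ρ > 1`
then `(1/z) g(z)` is integrable on some `[A,∞)`; if `ρ < 1` it is integrable
on no `[A,∞)`. -/
theorem statement2 (ρ : ℝ) (g : ℝ → ℝ) (A₀ : ℝ)
    (hg_cont : ContinuousOn g (Set.Ici A₀)) (hg_pos : ∀ z ∈ Set.Ici A₀, 0 < g z)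
    (hg : LogRegVarying g ρ) :
    (1 < ρ → ∃ A : ℝ, 0 < A ∧
      MeasureTheory.IntegrableOn (fun z => (1 / z) * g z) (Set.Ici A)) ∧
    (ρ < 1 → ∀ A : ℝ, 0 < A →
      ¬ MeasureTheory.IntegrableOn (fun z => (1 / z) * g z) (Set.Ici A)) :=
  ⟨hg.exists_integrableOn_Ici hg_cont hg_pos, fun hρ _ hA => hg.not_integrableOn_Ici hg_pos hρ hA⟩
end

section
/- (Proposition 3, Integrability, case ρ = 1.) Let g be log-regularly varying at ∞ with index ρ = 1, and write g(z) = (log z)^{−1} s(z) for z large, with s log-slowly varying at ∞. If there exists β > 1 such that s(z) < (log(log z))^{−β} for all sufficiently large z, then there exists A > 0 such that z ↦ (1/z)g(z) is integrable on [A,∞). If there exists β < 1 such that s(z) > (log(log z))^{−β} for all sufficiently large z, then for every A > 0 the function z ↦ (1/z)g(z) is not integrable on [A,∞). -/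
/-!
On `(e, ∞)` the function `(log log z) ^ (1 - β) / (1 - β)` is an antiderivative of
`z⁻¹ (log z)⁻¹ (log log z) ^ (-β)`; it tends to `0` when `β > 1` and to `∞` when `β < 1`.
Multiplying the hypothesis on `s` by `z⁻¹ (log z)⁻¹ > 0` compares `g z / z` with this
derivative, which gives integrability in the first case and non-integrability in the second.
-/

open Real Set MeasureTheory

open Filter

lemma one_lt_log_of_exp_one_lt {z : ℝ} (hz : exp 1 < z) : 1 < log z :=
  (lt_log_iff_exp_lt ((exp_pos 1).trans hz)).2 hz

lemma log_log_pos {z : ℝ} (hz : exp 1 < z) : 0 < log (log z) :=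
  log_pos (one_lt_log_of_exp_one_lt hz)

lemma log_pos_of_exp_one_lt {z : ℝ} (hz : exp 1 < z) : 0 < log z :=
  one_pos.trans (one_lt_log_of_exp_one_lt hz)

lemma inv_mul_inv_log_mul_log_log_rpow_nonneg {β z : ℝ} (hz : exp 1 < z) :
    0 ≤ z⁻¹ * (log z)⁻¹ * log (log z) ^ (-β) := by
  have := (exp_pos 1).trans hz
  have := log_pos_of_exp_one_lt hz
  have := log_log_pos hz
  positivity

lemma tendsto_log_log_atTop : Tendsto (fun z => log (log z)) atTop atTop :=
  tendsto_log_atTop.comp tendsto_log_atTop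

lemma hasDerivAt_log_log {z : ℝ} (hz : 1 < z) :
    HasDerivAt (fun x => log (log x)) (z⁻¹ * (log z)⁻¹) z := by
  convert (hasDerivAt_log (by positivity : z ≠ 0)).log (log_pos hz).ne' using 1
  ring

lemma hasDerivAt_log_log_rpow_div {β z : ℝ} (hβ : β ≠ 1) (hz : exp 1 < z) :
    HasDerivAt (fun x => log (log x) ^ (1 - β) / (1 - β))
      (z⁻¹ * (log z)⁻¹ * log (log z) ^ (-β)) z := by
  have hz₁ : 1 < z := (one_lt_exp_iff.2 one_pos).trans hz
  refine (((hasDerivAt_log_log hz₁).rpow_const (p := 1 - β)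
    (Or.inl (log_log_pos hz).ne')).div_const (1 - β)).congr_deriv ?_
  have : 1 - β ≠ 0 := sub_ne_zero.2 hβ.symm
  rw [sub_sub_cancel_left]
  field_simp

lemma integrableOn_Ioi_log_log_rpow {β a : ℝ} (hβ : 1 < β) (ha : exp 1 < a) :
    IntegrableOn (fun z => z⁻¹ * (log z)⁻¹ * log (log z) ^ (-β)) (Ioi a) := by
  refine integrableOn_Ioi_deriv_of_nonneg' (l := 0)
    (fun z hz => hasDerivAt_log_log_rpow_div hβ.ne' (ha.trans_le hz))
    (fun z hz => inv_mul_inv_log_mul_log_log_rpow_nonneg (ha.trans hz)) ?_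
  have h := ((tendsto_rpow_neg_atTop (sub_pos.2 hβ)).comp tendsto_log_log_atTop).div_const
      (1 - β)
  rw [zero_div, neg_sub] at h
  exact h

lemma not_integrableOn_Ioi_log_log_rpow {β a : ℝ} (hβ : β < 1) (ha : exp 1 < a) :
    ¬ IntegrableOn (fun z => z⁻¹ * (log z)⁻¹ * log (log z) ^ (-β)) (Ioi a) := fun hint =>
  not_tendsto_nhds_of_tendsto_atTop
    (((tendsto_rpow_atTop (sub_pos.2 hβ)).comp tendsto_log_log_atTop).atTop_div_const
      (sub_pos.2 hβ)) _
    (tendsto_limUnder_of_hasDerivAt_of_integrableOn_Ioi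
      (fun _ hz => hasDerivAt_log_log_rpow_div hβ.ne (ha.trans hz)) hint)

lemma integrableOn_Ioi_inv_mul_of_le_log_log_rpow {g : ℝ → ℝ} {β a : ℝ} (hβ : 1 < β)
    (ha : exp 1 < a) (hg : ContinuousOn g (Ioi a)) (hg_nonneg : ∀ z ∈ Ioi a, 0 ≤ g z)
    (hg_le : ∀ z ∈ Ioi a, g z ≤ (log z)⁻¹ * log (log z) ^ (-β)) :
    IntegrableOn (fun z => 1 / z * g z) (Ioi a) := by
  refine (integrableOn_Ioi_log_log_rpow hβ ha).mono' ?_ ?_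
  · exact ((continuousOn_const.div continuousOn_id fun z hz =>
      ((exp_pos 1).trans (ha.trans hz)).ne').mul hg).aestronglyMeasurable measurableSet_Ioi
  · refine (ae_restrict_iff' measurableSet_Ioi).2 (Eventually.of_forall fun z hz => ?_)
    have hz₀ : 0 < z := (exp_pos 1).trans (ha.trans hz)
    rw [norm_of_nonneg (mul_nonneg (one_div_pos.2 hz₀).le (hg_nonneg z hz)), one_div, mul_assoc]
    exact mul_le_mul_of_nonneg_left (hg_le z hz) (inv_nonneg.2 hz₀.le)

lemma not_integrableOn_Ioi_inv_mul_of_log_log_rpow_le {g : ℝ → ℝ} {β a : ℝ} (hβ : β < 1)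
    (ha : exp 1 < a) (hg_ge : ∀ z ∈ Ioi a, (log z)⁻¹ * log (log z) ^ (-β) ≤ g z) :
    ¬ IntegrableOn (fun z => 1 / z * g z) (Ioi a) := by
  intro hint
  have hmeas : Measurable fun z : ℝ => z⁻¹ * (log z)⁻¹ * log (log z) ^ (-β) := by fun_prop
  refine not_integrableOn_Ioi_log_log_rpow hβ ha (hint.mono' hmeas.aestronglyMeasurable ?_)
  refine (ae_restrict_iff' measurableSet_Ioi).2 (Eventually.of_forall fun z hz => ?_)
  have hz₀ : 0 < z := (exp_pos 1).trans (ha.trans hz)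
  rw [norm_of_nonneg (inv_mul_inv_log_mul_log_log_rpow_nonneg (ha.trans hz)), one_div, mul_assoc]
  exact mul_le_mul_of_nonneg_left (hg_ge z hz) (inv_nonneg.2 hz₀.le)

theorem statement3_general (g s : ℝ → ℝ) (A₀ : ℝ)
    (hg_cont : ContinuousOn g (Set.Ici A₀)) (hg_pos : ∀ z ∈ Set.Ici A₀, 0 < g z)
    (A₁ : ℝ) (hrepr : ∀ z : ℝ, A₁ ≤ z → g z = (Real.log z)⁻¹ * s z) :
    ((∃ β : ℝ, 1 < β ∧ ∃ Z : ℝ, ∀ z : ℝ, Z ≤ z → s z < (Real.log (Real.log z)) ^ (-β)) →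
      ∃ A : ℝ, 0 < A ∧
        MeasureTheory.IntegrableOn (fun z => (1 / z) * g z) (Set.Ici A)) ∧
    ((∃ β : ℝ, β < 1 ∧ ∃ Z : ℝ, ∀ z : ℝ, Z ≤ z → (Real.log (Real.log z)) ^ (-β) < s z) →
      ∀ A : ℝ, 0 < A →
        ¬ MeasureTheory.IntegrableOn (fun z => (1 / z) * g z) (Set.Ici A)) := by
  have inv_log_nonneg {B z : ℝ} (hB : exp 1 < B) (hz : z ∈ Ioi B) : 0 ≤ (log z)⁻¹ :=
    inv_nonneg.2 (log_pos_of_exp_one_lt (hB.trans hz)).le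
  constructor
  · rintro ⟨β, hβ, Z, hsZ⟩
    obtain ⟨B, hBA₀, hBA₁, hBZ, hBe⟩ := ((eventually_ge_atTop A₀).and <|
      (eventually_ge_atTop A₁).and <| (eventually_ge_atTop Z).and (eventually_gt_atTop _)).exists
    refine ⟨B, (exp_pos 1).trans hBe, ?_⟩
    rw [integrableOn_Ici_iff_integrableOn_Ioi]
    refine integrableOn_Ioi_inv_mul_of_le_log_log_rpow hβ hBe
      (hg_cont.mono fun z hz => hBA₀.trans (le_of_lt hz))
      (fun z hz => (hg_pos z (hBA₀.trans (le_of_lt hz))).le) fun z hz => ?_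
    rw [hrepr z (hBA₁.trans (le_of_lt hz))]
    exact mul_le_mul_of_nonneg_left (hsZ z (hBZ.trans (le_of_lt hz))).le (inv_log_nonneg hBe hz)
  · rintro ⟨β, hβ, Z, hsZ⟩ A - hint
    obtain ⟨B, hBA, hBA₁, hBZ, hBe⟩ := ((eventually_ge_atTop A).and <|
      (eventually_ge_atTop A₁).and <| (eventually_ge_atTop Z).and (eventually_gt_atTop _)).exists
    refine not_integrableOn_Ioi_inv_mul_of_log_log_rpow_le hβ hBe (fun z hz => ?_)
      (hint.mono_set fun z hz => hBA.trans (le_of_lt hz))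
    rw [hrepr z (hBA₁.trans (le_of_lt hz))]
    exact mul_le_mul_of_nonneg_left (hsZ z (hBZ.trans (le_of_lt hz))).le (inv_log_nonneg hBe hz)

/-- Proposition 3 (Integrability, case ρ = 1): write `g(z) = (log z)⁻¹ s(z)`
for large `z` with `s ∈ L₀(∞)`.  If `s(z) < (log log z)^{−β}` for some `β > 1`
and all large `z`, then `(1/z) g(z)` is integrable on some `[A,∞)`; if
`s(z) > (log log z)^{−β}` for some `β < 1` and all large `z`, then it is
integrable on no `[A,∞)`. -/
theorem statement3 (g s : ℝ → ℝ) (A₀ : ℝ)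
    (hg_cont : ContinuousOn g (Set.Ici A₀)) (hg_pos : ∀ z ∈ Set.Ici A₀, 0 < g z)
    (hg : LogRegVarying g 1) (hs : LogRegVarying s 0)
    (A₁ : ℝ) (hrepr : ∀ z : ℝ, A₁ ≤ z → g z = (Real.log z)⁻¹ * s z) :
    ((∃ β : ℝ, 1 < β ∧ ∃ Z : ℝ, ∀ z : ℝ, Z ≤ z → s z < (Real.log (Real.log z)) ^ (-β)) →
      ∃ A : ℝ, 0 < A ∧
        MeasureTheory.IntegrableOn (fun z => (1 / z) * g z) (Set.Ici A)) ∧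
    ((∃ β : ℝ, β < 1 ∧ ∃ Z : ℝ, ∀ z : ℝ, Z ≤ z → (Real.log (Real.log z)) ^ (-β) < s z) →
      ∀ A : ℝ, 0 < A →
        ¬ MeasureTheory.IntegrableOn (fun z => (1 / z) * g z) (Set.Ici A)) :=
  statement3_general g s A₀ hg_cont hg_pos A₁ hrepr
end

section
/- (Proposition 4, Location–scale transformation.) Let f : ℝ → ℝ with g(z) = z f(z) log-regularly varying at ∞ with index ρ. Then for any λ ≥ 0 and τ ≥ 1, as z → ∞, g((z−μ)/σ)/g(z) → 1 and (1/σ) f((z−μ)/σ)/f(z) → 1, uniformly on (μ,σ) ∈ [−λ,λ] × [1/τ, τ]; that is, for every ε > 0 there exists Z such that z ≥ Z implies |g((z−μ)/σ)/g(z) − 1| < ε and |(1/σ) f((z−μ)/σ)/f(z) − 1| < ε for all (μ,σ) ∈ [−λ,λ] × [1/τ, τ]. -/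
open Real Set

/-!
Write `w = (z - μ)/σ` and `ν = log w / log z`, so that `w = z ^ ν`. Since `log w - log z` stays
bounded for `(μ, σ)` in a compact set while `log z → ∞`, `ν → 1` uniformly, and log-regular variation
gives `g w / g z = ν ^ (-ρ) · (ν ^ ρ g(z ^ ν) / g z) → 1`. The statement for `f` follows from
`(1/σ) f(w) / f(z) = z/(z - μ) · g(w)/g(z)`. Uniformity in `(μ, σ) ∈ K` is convergence along the
filter `atTop ×ˢ 𝓟 K`.
-/

open Filter Topology Asymptotics

variable {α : Type*} {l : Filter α}

theorem tendsto_div_of_abs_sub_le {u v : α → ℝ} {C : ℝ} (hv : Tendsto v l atTop)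
    (huv : ∀ᶠ x in l, |u x - v x| ≤ C) : Tendsto (fun x => u x / v x) l (𝓝 1) := by
  have hbounded : (u - v) =O[l] (fun _ => (1 : ℝ)) :=
    IsBigO.of_bound C (by simpa using huv)
  have hequiv : u ~[l] v :=
    hbounded.trans_isLittleO ((isLittleO_one_left_iff ℝ).2 (tendsto_abs_atTop_atTop.comp hv))
  exact (isEquivalent_iff_tendsto_one (hv.eventually_ne_atTop 0)).1 hequiv

theorem abs_log_le_log_of_mem_Icc {a x : ℝ} (ha : 0 < a) (hx : x ∈ Icc a⁻¹ a) :
    |log x| ≤ log a := by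
  have hx0 : 0 < x := (inv_pos.2 ha).trans_le hx.1
  rw [abs_le]
  constructor
  · simpa only [log_inv] using log_le_log (inv_pos.2 ha) hx.1
  · exact log_le_log hx0 hx.2

theorem abs_log_locScale_sub_log_le {z μ σ τ : ℝ} (hτ : 0 < τ) (hz : 0 < z) (hμ : 2 * |μ| ≤ z)
    (hσ : σ ∈ Icc τ⁻¹ τ) : |log ((z - μ) / σ) - log z| ≤ log 2 + log τ := by
  have hshift : (z - μ) / z ∈ Icc 2⁻¹ 2 := by
    constructor
    · rw [le_div_iff₀ hz]; linarith [le_abs_self μ, neg_abs_le μ]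
    · rw [div_le_iff₀ hz]; linarith [le_abs_self μ, neg_abs_le μ]
  have hσ0 : 0 < σ := (inv_pos.2 hτ).trans_le hσ.1
  have hzμ : z - μ ≠ 0 := by linarith [le_abs_self μ]
  have hsplit : log ((z - μ) / σ) - log z = log ((z - μ) / z) - log σ := by
    rw [log_div hzμ hσ0.ne', log_div hzμ hz.ne']; ring
  calc |log ((z - μ) / σ) - log z|
      ≤ |log ((z - μ) / z)| + |log σ| := hsplit ▸ abs_sub _ _
    _ ≤ log 2 + log τ :=
      add_le_add (abs_log_le_log_of_mem_Icc two_pos hshift) (abs_log_le_log_of_mem_Icc hτ hσ)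

namespace LogRegVarying

variable {g : ℝ → ℝ} {ρ : ℝ}

theorem tendsto_rpow_mul_div (hg : LogRegVarying g ρ) {z ν : α → ℝ} (hz : Tendsto z l atTop)
    (hν : Tendsto ν l (𝓝 1)) : Tendsto (fun x => ν x ^ ρ * g (z x ^ ν x) / g (z x)) l (𝓝 1) := by
  rw [Metric.tendsto_nhds]
  intro ε hε
  obtain ⟨A, -, hA⟩ := hg ε hε 2 one_le_two
  have hν_near : ∀ᶠ x in l, ν x ∈ Icc (1 / 2) 2 :=
    hν (Icc_mem_nhds (by norm_num) (by norm_num))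
  filter_upwards [hz.eventually_ge_atTop A, hν_near] with x hzx hνx
  exact hA _ hzx _ hνx.1 hνx.2

theorem tendsto_div_of_abs_log_sub_le (hg : LogRegVarying g ρ) {z w : α → ℝ} {C : ℝ}
    (hz : Tendsto z l atTop) (hw : ∀ᶠ x in l, 0 < w x)
    (hC : ∀ᶠ x in l, |log (w x) - log (z x)| ≤ C) :
    Tendsto (fun x => g (w x) / g (z x)) l (𝓝 1) := by
  set ν : α → ℝ := fun x => log (w x) / log (z x)
  have hν : Tendsto ν l (𝓝 1) := tendsto_div_of_abs_sub_le (tendsto_log_atTop.comp hz) hC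
  have hzν : ∀ᶠ x in l, z x ^ ν x = w x := by
    filter_upwards [hz.eventually_gt_atTop 1, hw] with x hz1 hwx
    rw [rpow_def_of_pos (one_pos.trans hz1), mul_div_cancel₀ _ (log_pos hz1).ne', exp_log hwx]
  have hνρ : Tendsto (fun x => ν x ^ ρ) l (𝓝 1) := by
    simpa using hν.rpow_const (Or.inl one_ne_zero)
  have hlim := (hg.tendsto_rpow_mul_div hz hν).div hνρ one_ne_zero
  rw [div_one] at hlim
  refine hlim.congr' ?_
  filter_upwards [hzν, hνρ.eventually_ne one_ne_zero] with x hzx hνx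
  rw [Pi.div_apply, hzx]
  field_simp

variable {z μ σ : α → ℝ} {lam τ : ℝ}

theorem tendsto_locScale (hg : LogRegVarying g ρ) (hτ : 0 < τ) (hz : Tendsto z l atTop)
    (hμ : ∀ᶠ x in l, |μ x| ≤ lam) (hσ : ∀ᶠ x in l, σ x ∈ Icc τ⁻¹ τ) :
    Tendsto (fun x => g ((z x - μ x) / σ x) / g (z x)) l (𝓝 1) := by
  have hz_large : ∀ᶠ x in l, 0 < z x ∧ 2 * |μ x| ≤ z x := by
    filter_upwards [hz.eventually_gt_atTop 0, hz.eventually_ge_atTop (2 * lam), hμ]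
      with x hz0 hzlam hμx
    exact ⟨hz0, by linarith⟩
  refine hg.tendsto_div_of_abs_log_sub_le (C := log 2 + log τ) hz ?_ ?_
  · filter_upwards [hz_large, hσ] with x ⟨hz0, hzμ⟩ hσx
    have : 0 < z x - μ x := by linarith [le_abs_self (μ x)]
    exact div_pos this ((inv_pos.2 hτ).trans_le hσx.1)
  · filter_upwards [hz_large, hσ] with x ⟨hz0, hzμ⟩ hσx
    exact abs_log_locScale_sub_log_le hτ hz0 hzμ hσx

theorem tendsto_locScale_density {f : ℝ → ℝ} (hg : LogRegVarying (fun z => z * f z) ρ)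
    (hτ : 0 < τ) (hz : Tendsto z l atTop) (hμ : ∀ᶠ x in l, |μ x| ≤ lam)
    (hσ : ∀ᶠ x in l, σ x ∈ Icc τ⁻¹ τ) :
    Tendsto (fun x => 1 / σ x * f ((z x - μ x) / σ x) / f (z x)) l (𝓝 1) := by
  have hshift : Tendsto (fun x => z x / (z x - μ x)) l (𝓝 1) := by
    have h := tendsto_div_of_abs_sub_le (u := fun x => z x - μ x) (C := lam) hz
      (by filter_upwards [hμ] with x hμx; simpa using hμx)
    simpa using h.inv₀ one_ne_zero
  have hlim := hshift.mul (hg.tendsto_locScale hτ hz hμ hσ)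
  rw [one_mul] at hlim
  refine hlim.congr' ?_
  filter_upwards [hz.eventually_gt_atTop lam, hμ, hσ] with x hzx hμx hσx
  have hzμ : z x - μ x ≠ 0 := by linarith [le_abs_self (μ x)]
  have hz0 : z x ≠ 0 := by linarith [abs_nonneg (μ x)]
  have hσ0 : σ x ≠ 0 := ((inv_pos.2 hτ).trans_le hσx.1).ne'
  -- at a zero of `f` both sides are `0` by the convention `a / 0 = 0`
  rcases eq_or_ne (f (z x)) 0 with hf | hf
  · simp [hf]
  · field_simp

end LogRegVarying

theorem statement6_general (ρ : ℝ) (f : ℝ → ℝ) (hg : LogRegVarying (fun z => z * f z) ρ) :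
    ∀ lam : ℝ, 0 ≤ lam → ∀ τ : ℝ, 1 ≤ τ → ∀ ε : ℝ, 0 < ε →
      ∃ Z : ℝ, ∀ z : ℝ, Z ≤ z → ∀ μ σ : ℝ, |μ| ≤ lam → 1 / τ ≤ σ → σ ≤ τ →
        |((z - μ) / σ * f ((z - μ) / σ)) / (z * f z) - 1| < ε ∧
        |(1 / σ) * f ((z - μ) / σ) / f z - 1| < ε := by
  intro lam _ τ hτ ε hε
  set K : Set (ℝ × ℝ) := {p | |p.1| ≤ lam ∧ p.2 ∈ Icc τ⁻¹ τ}
  set L : Filter (ℝ × (ℝ × ℝ)) := atTop ×ˢ 𝓟 K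
  have hτ0 : 0 < τ := one_pos.trans_le hτ
  have hz : Tendsto Prod.fst L atTop := tendsto_fst
  have hK : ∀ᶠ x in L, x.2 ∈ K := eventually_prod_principal_iff.2 (.of_forall fun _ _ h => h)
  have hμ : ∀ᶠ x in L, |x.2.1| ≤ lam := hK.mono fun _ h => h.1
  have hσ : ∀ᶠ x in L, x.2.2 ∈ Icc τ⁻¹ τ := hK.mono fun _ h => h.2
  have hg_near := Metric.tendsto_nhds.1 (hg.tendsto_locScale hτ0 hz hμ hσ) ε hε
  have hf_near := Metric.tendsto_nhds.1 (hg.tendsto_locScale_density hτ0 hz hμ hσ) ε hε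
  obtain ⟨Z, hZ⟩ := eventually_atTop.1 (eventually_prod_principal_iff.1 (hg_near.and hf_near))
  refine ⟨Z, fun z hzZ μ σ hμz hσ₁ hσ₂ => ?_⟩
  simpa only [Real.dist_eq] using hZ z hzZ (μ, σ) ⟨hμz, by rwa [← one_div], hσ₂⟩

/-- Proposition 4 (Location–scale transformation): if `g(z) = z f(z) ∈ L_ρ(∞)`,
then `g((z−μ)/σ)/g(z) → 1` and `(1/σ) f((z−μ)/σ)/f(z) → 1` as `z → ∞`,
uniformly on `(μ,σ) ∈ [−λ,λ] × [1/τ, τ]` for any `λ ≥ 0`, `τ ≥ 1`. -/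
theorem statement6 (ρ : ℝ) (f : ℝ → ℝ) (A₀ : ℝ)
    (hc : ContinuousOn (fun z => z * f z) (Set.Ici A₀))
    (hp : ∀ z ∈ Set.Ici A₀, 0 < z * f z)
    (hg : LogRegVarying (fun z => z * f z) ρ) :
    ∀ lam : ℝ, 0 ≤ lam → ∀ τ : ℝ, 1 ≤ τ → ∀ ε : ℝ, 0 < ε →
      ∃ Z : ℝ, ∀ z : ℝ, Z ≤ z → ∀ μ σ : ℝ, |μ| ≤ lam → 1 / τ ≤ σ → σ ≤ τ →
        |((z - μ) / σ * f ((z - μ) / σ)) / (z * f z) - 1| < ε ∧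
        |(1 / σ) * f ((z - μ) / σ) / f z - 1| < ε :=
  statement6_general ρ f hg
end

section
/- (Proposition 5, Properness of the posterior.) In the location–scale model, if the observations x₁,…,xₙ (n ≥ 2) are pairwise distinct, then the marginal m(xₙ) = ∫₀^∞ ∫_ℝ π(μ,σ) ∏_{i=1}^n (1/σ)f((xᵢ−μ)/σ) dμ dσ is finite, so the joint posterior density π(μ,σ | xₙ) is proper. -/
/-!
Because `|z| f(z)` is bounded by some `K` and distinct observations are `2δ`-separated, for each `μ`
all factors but at most one satisfy `f((xᵢ - μ)/σ) ≤ (K/δ) σ`; with `π(μ, σ) ≤ B/σ` this bounds the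
integrand by `B (K/δ)^(n-2) σ⁻³` times a sum, over ordered pairs `i ≠ j`, of
`f((xᵢ - μ)/σ) f((xⱼ - μ)/σ)`. For each pair the substitutions `μ = xᵢ - σu` and
`w = u + (xⱼ - xᵢ)/σ` bound the double integral by `1/|xⱼ - xᵢ|`.
-/

open Set MeasureTheory Filter Topology
open scoped ENNReal

theorem Continuous.bddAbove_range_of_abs_tail_antitone {g : ℝ → ℝ} (hg : Continuous g) {M : ℝ}
    (htail : ∀ y z, M ≤ |z| → |z| ≤ |y| → g y ≤ g z) : BddAbove (range g) := by
  obtain ⟨C, hC⟩ := (isCompact_Icc (a := -|M|) (b := |M|)).bddAbove_image hg.continuousOn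
  refine ⟨C, ?_⟩
  rintro _ ⟨z, rfl⟩
  rcases le_or_gt |z| |M| with hz | hz
  · exact hC (mem_image_of_mem g (abs_le.mp hz))
  · have hM : |M| ∈ Icc (-|M|) |M| := ⟨by linarith [abs_nonneg M], le_rfl⟩
    calc g z ≤ g |M| :=
          htail z |M| ((le_abs_self M).trans (abs_abs M).ge) (by rw [abs_abs]; exact hz.le)
      _ ≤ C := hC (mem_image_of_mem g hM)

theorem apply_div_le_of_abs_mul_apply_le {f : ℝ → ℝ} {K δ σ t : ℝ} (hK : ∀ z, |z| * f z ≤ K)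
    (hδ : 0 < δ) (hσ : 0 < σ) (ht : δ ≤ |t|) : f (t / σ) ≤ K / δ * σ := by
  have hK0 : 0 ≤ K := by simpa using hK 0
  have habs : |t / σ| = |t| / σ := by rw [abs_div, abs_of_pos hσ]
  have hpos : 0 < |t / σ| := by rw [habs]; exact div_pos (hδ.trans_le ht) hσ
  calc f (t / σ) ≤ K / |t / σ| := (le_div_iff₀' hpos).2 (hK _)
    _ = K * σ / |t| := by rw [habs]; field_simp
    _ ≤ K * σ / δ := div_le_div_of_nonneg_left (by positivity) hδ ht
    _ = K / δ * σ := by ring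

theorem exists_pos_forall_ne_le_dist {ι X : Type*} [Finite ι] [Nonempty ι] [MetricSpace X]
    {x : ι → X} (hx : Function.Injective x) :
    ∃ δ > 0, ∀ μ : X, ∃ i₀, ∀ j ≠ i₀, δ ≤ dist (x j) μ := by
  have hsmall : ∀ᶠ δ in 𝓝[>] (0 : ℝ), ∀ i j, i ≠ j → 2 * δ ≤ dist (x i) (x j) := by
    simp only [eventually_all]
    intro i j hij
    have h2 : Tendsto (fun δ : ℝ => 2 * δ) (𝓝[>] 0) (𝓝 0) := by
      simpa using ((continuous_const_mul (2 : ℝ)).tendsto 0).mono_left nhdsWithin_le_nhds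
    exact h2.eventually_le_const (dist_pos.2 (hx.ne hij))
  obtain ⟨δ, hδ, hδpos⟩ := (hsmall.and self_mem_nhdsWithin).exists
  refine ⟨δ, hδpos, fun μ => ?_⟩
  by_cases hnear : ∃ i, dist (x i) μ < δ
  · obtain ⟨i, hi⟩ := hnear
    refine ⟨i, fun j hj => ?_⟩
    linarith [hδ j i hj, dist_triangle_right (x j) (x i) μ]
  · simp only [not_exists, not_lt] at hnear
    exact ⟨Classical.arbitrary ι, fun j _ => hnear j⟩

theorem Finset.prod_le_pow_mul_sum_offDiag {ι : Type*} [Fintype ι] [DecidableEq ι] {k : ℕ}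
    (hι : Fintype.card ι = k + 2) (a : ι → ℝ≥0∞) {m : ℝ≥0∞} (i₀ : ι)
    (hm : ∀ j ≠ i₀, a j ≤ m) :
    ∏ i, a i ≤ m ^ k * ∑ p ∈ univ.offDiag, a p.1 * a p.2 := by
  obtain ⟨j₀, hj₀⟩ := Fintype.exists_ne_of_one_lt_card (by omega) i₀
  have hj₀mem : j₀ ∈ univ.erase i₀ := mem_erase.2 ⟨hj₀, mem_univ _⟩
  have hrest : ∏ l ∈ (univ.erase i₀).erase j₀, a l ≤ m ^ k := by
    have hcard : ((univ.erase i₀).erase j₀).card = k := by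
      rw [card_erase_of_mem hj₀mem, card_erase_of_mem (mem_univ _), card_univ, hι]; rfl
    rw [← hcard]
    exact prod_le_pow_card _ _ _ fun l hl => hm l (mem_erase.1 (mem_erase.1 hl).2).1
  have hmem : (i₀, j₀) ∈ univ.offDiag := mem_offDiag.2 ⟨mem_univ _, mem_univ _, hj₀.symm⟩
  have hpair : a i₀ * a j₀ ≤ ∑ p ∈ univ.offDiag, a p.1 * a p.2 :=
    single_le_sum (f := fun p : ι × ι => a p.1 * a p.2) (fun _ _ => zero_le) hmem
  calc ∏ i, a i = a i₀ * a j₀ * ∏ l ∈ (univ.erase i₀).erase j₀, a l := by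
        rw [← mul_prod_erase univ a (mem_univ i₀), ← mul_prod_erase _ a hj₀mem, mul_assoc]
    _ ≤ (∑ p ∈ univ.offDiag, a p.1 * a p.2) * m ^ k := mul_le_mul' hpair hrest
    _ = m ^ k * ∑ p ∈ univ.offDiag, a p.1 * a p.2 := mul_comm _ _

theorem lintegral_comp_sub_div (h : ℝ → ℝ≥0∞) (a : ℝ) {σ : ℝ} (hσ : 0 < σ) :
    ∫⁻ μ, h ((a - μ) / σ) = ENNReal.ofReal σ * ∫⁻ u, h u := by
  have hderiv : ∀ u ∈ univ, HasDerivWithinAt (fun u => a - σ * u) (-σ) univ u := fun u _ => by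
    rw [hasDerivWithinAt_univ]
    simpa using ((hasDerivAt_id u).const_mul σ).const_sub a
  have hinj : InjOn (fun u => a - σ * u) univ := fun u _ v _ huv => by
    simpa [hσ.ne'] using huv
  have himage : (fun u => a - σ * u) '' univ = univ :=
    image_univ_of_surjective fun μ => ⟨(a - μ) / σ, by field_simp; ring⟩
  have := lintegral_image_eq_lintegral_abs_deriv_mul MeasurableSet.univ hderiv hinj
    fun μ => h ((a - μ) / σ)
  simp only [himage, Measure.restrict_univ] at this
  rw [this, ← lintegral_const_mul' _ _ ENNReal.ofReal_ne_top]
  congr 1 with u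
  rw [abs_neg, abs_of_pos hσ]
  congr 2
  field_simp
  ring

theorem setLIntegral_Ioi_inv_sq_mul_comp_add_div_le (h : ℝ → ℝ≥0∞) (u : ℝ) {c : ℝ}
    (hc : c ≠ 0) :
    ∫⁻ σ in Ioi 0, ENNReal.ofReal (σ⁻¹ ^ 2) * h (u + c / σ) ≤
      ENNReal.ofReal |c|⁻¹ * ∫⁻ w, h w := by
  have hderiv : ∀ σ ∈ Ioi (0 : ℝ),
      HasDerivWithinAt (fun σ => u + c / σ) (c * -(σ ^ 2)⁻¹) (Ioi 0) σ := fun σ hσ => by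
    simpa [div_eq_mul_inv] using
      (((hasDerivAt_inv (ne_of_gt hσ)).const_mul c).const_add u).hasDerivWithinAt
  have hinj : InjOn (fun σ => u + c / σ) (Ioi 0) := fun σ hσ τ hτ hστ => by
    simpa [hc, div_eq_mul_inv] using hστ
  have hchange := lintegral_image_eq_lintegral_abs_deriv_mul measurableSet_Ioi hderiv hinj
    fun w => ENNReal.ofReal |c|⁻¹ * h w
  calc ∫⁻ σ in Ioi 0, ENNReal.ofReal (σ⁻¹ ^ 2) * h (u + c / σ)
      = ∫⁻ σ in Ioi 0, ENNReal.ofReal |c * -(σ ^ 2)⁻¹| *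
          (ENNReal.ofReal |c|⁻¹ * h (u + c / σ)) := by
        refine setLIntegral_congr_fun measurableSet_Ioi fun σ hσ => ?_
        rw [← mul_assoc, ← ENNReal.ofReal_mul (abs_nonneg _), abs_mul, abs_neg,
          abs_of_nonneg (by positivity : (0 : ℝ) ≤ (σ ^ 2)⁻¹)]
        congr 2
        field_simp
    _ = ∫⁻ w in (fun σ => u + c / σ) '' Ioi 0, ENNReal.ofReal |c|⁻¹ * h w := hchange.symm
    _ ≤ ∫⁻ w, ENNReal.ofReal |c|⁻¹ * h w := setLIntegral_le_lintegral _ _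
    _ = ENNReal.ofReal |c|⁻¹ * ∫⁻ w, h w := lintegral_const_mul' _ _ ENNReal.ofReal_ne_top

theorem setLIntegral_Ioi_lintegral_inv_pow_three_mul_le {g : ℝ → ℝ≥0∞} (hg : Measurable g)
    {a b : ℝ} (hab : a ≠ b) :
    ∫⁻ σ in Ioi 0, ∫⁻ μ, ENNReal.ofReal (σ⁻¹ ^ 3) * (g ((a - μ) / σ) * g ((b - μ) / σ)) ≤
      ENNReal.ofReal |b - a|⁻¹ * (∫⁻ z, g z) ^ 2 := by
  have hinner : ∀ σ ∈ Ioi (0 : ℝ),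
      ∫⁻ μ, ENNReal.ofReal (σ⁻¹ ^ 3) * (g ((a - μ) / σ) * g ((b - μ) / σ)) =
        ∫⁻ u, g u * (ENNReal.ofReal (σ⁻¹ ^ 2) * g (u + (b - a) / σ)) := fun σ (hσ : 0 < σ) => by
    have hshift : ∀ μ, (b - μ) / σ = (a - μ) / σ + (b - a) / σ := fun μ => by ring
    calc ∫⁻ μ, ENNReal.ofReal (σ⁻¹ ^ 3) * (g ((a - μ) / σ) * g ((b - μ) / σ))
        = ENNReal.ofReal (σ⁻¹ ^ 3) * ∫⁻ μ, g ((a - μ) / σ) * g ((a - μ) / σ + (b - a) / σ) := by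
          rw [lintegral_const_mul' _ _ ENNReal.ofReal_ne_top]
          congr 1
          exact lintegral_congr fun μ => by rw [hshift μ]
      _ = ENNReal.ofReal (σ⁻¹ ^ 3 * σ) * ∫⁻ u, g u * g (u + (b - a) / σ) := by
          rw [lintegral_comp_sub_div (fun u => g u * g (u + (b - a) / σ)) a hσ, ← mul_assoc,
            ← ENNReal.ofReal_mul (by positivity)]
      _ = ∫⁻ u, g u * (ENNReal.ofReal (σ⁻¹ ^ 2) * g (u + (b - a) / σ)) := by
          rw [← lintegral_const_mul' _ _ ENNReal.ofReal_ne_top]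
          congr 1 with u
          rw [pow_succ, mul_assoc, inv_mul_cancel₀ (ne_of_gt hσ), mul_one, mul_left_comm]
  calc ∫⁻ σ in Ioi 0, ∫⁻ μ, ENNReal.ofReal (σ⁻¹ ^ 3) * (g ((a - μ) / σ) * g ((b - μ) / σ))
      = ∫⁻ σ in Ioi 0, ∫⁻ u, g u * (ENNReal.ofReal (σ⁻¹ ^ 2) * g (u + (b - a) / σ)) :=
        setLIntegral_congr_fun measurableSet_Ioi hinner
    _ = ∫⁻ u, g u * ∫⁻ σ in Ioi 0, ENNReal.ofReal (σ⁻¹ ^ 2) * g (u + (b - a) / σ) := by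
        rw [lintegral_lintegral_swap (by fun_prop)]
        congr 1 with u
        exact lintegral_const_mul _ (by fun_prop)
    _ ≤ ∫⁻ u, g u * (ENNReal.ofReal |b - a|⁻¹ * ∫⁻ z, g z) := by
        gcongr with u
        exact setLIntegral_Ioi_inv_sq_mul_comp_add_div_le g u (sub_ne_zero.2 hab.symm)
    _ = ENNReal.ofReal |b - a|⁻¹ * (∫⁻ z, g z) ^ 2 := by
        rw [lintegral_mul_const _ hg]
        ring

theorem setLIntegral_Ioi_lintegral_sum_offDiag_lt_top {ι : Type*} [Fintype ι] [DecidableEq ι]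
    {g : ℝ → ℝ≥0∞} (hg : Measurable g) (hg_fin : ∫⁻ z, g z ≠ ⊤) {x : ι → ℝ}
    (hx : Function.Injective x) :
    ∫⁻ σ in Ioi 0, ∫⁻ μ, ∑ q ∈ Finset.univ.offDiag,
      ENNReal.ofReal (σ⁻¹ ^ 3) * (g ((x q.1 - μ) / σ) * g ((x q.2 - μ) / σ)) < ⊤ := by
  have hmeas : ∀ q : ι × ι, Measurable (Function.uncurry fun σ μ =>
      ENNReal.ofReal (σ⁻¹ ^ 3) * (g ((x q.1 - μ) / σ) * g ((x q.2 - μ) / σ))) :=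
    fun q => by fun_prop
  have hinner : ∀ σ, ∫⁻ μ, ∑ q ∈ Finset.univ.offDiag,
      ENNReal.ofReal (σ⁻¹ ^ 3) * (g ((x q.1 - μ) / σ) * g ((x q.2 - μ) / σ)) =
      ∑ q ∈ Finset.univ.offDiag, ∫⁻ μ,
        ENNReal.ofReal (σ⁻¹ ^ 3) * (g ((x q.1 - μ) / σ) * g ((x q.2 - μ) / σ)) := fun σ =>
    lintegral_finsetSum _ fun q _ => (hmeas q).of_uncurry_left
  simp only [hinner]
  rw [lintegral_finsetSum _ fun q _ => (hmeas q).lintegral_prod_right]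
  refine ENNReal.sum_lt_top.2 fun q hq => ?_
  have hne : x q.1 ≠ x q.2 := hx.ne (Finset.mem_offDiag.1 hq).2.2
  exact (setLIntegral_Ioi_lintegral_inv_pow_three_mul_le hg hne).trans_lt
    (ENNReal.mul_lt_top ENNReal.ofReal_lt_top (ENNReal.pow_lt_top hg_fin.lt_top))

theorem ofReal_mul_prod_density_le_sum_offDiag {ι : Type*} [Fintype ι] [DecidableEq ι]
    {k : ℕ} (hι : Fintype.card ι = k + 2) {f : ℝ → ℝ} (hf0 : ∀ z, 0 ≤ f z) {K δ B : ℝ}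
    (hK : ∀ z, |z| * f z ≤ K) (hδ : 0 < δ) (hB : 0 ≤ B) {x : ι → ℝ} {p σ μ : ℝ}
    (hσ : 0 < σ) (hp : σ * p ≤ B) (i₀ : ι) (hfar : ∀ j ≠ i₀, δ ≤ |x j - μ|) :
    ENNReal.ofReal (p * ∏ i, (1 / σ) * f ((x i - μ) / σ)) ≤
      ENNReal.ofReal (B * (K / δ) ^ k) * ∑ q ∈ Finset.univ.offDiag, ENNReal.ofReal (σ⁻¹ ^ 3) *
        (ENNReal.ofReal (f ((x q.1 - μ) / σ)) * ENNReal.ofReal (f ((x q.2 - μ) / σ))) := by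
  have hK0 : 0 ≤ K := by simpa using hK 0
  have hp' : p ≤ B * σ⁻¹ := by
    rw [← div_eq_mul_inv, le_div_iff₀ hσ, mul_comm]
    exact hp
  have hprod := Finset.prod_le_pow_mul_sum_offDiag hι (fun i => ENNReal.ofReal (f ((x i - μ) / σ)))
    i₀ fun j hj => ENNReal.ofReal_le_ofReal (apply_div_le_of_abs_mul_apply_le hK hδ hσ (hfar j hj))
  have hscale : ENNReal.ofReal (B * σ⁻¹ ^ (k + 3)) * ENNReal.ofReal (K / δ * σ) ^ k =
      ENNReal.ofReal (B * (K / δ) ^ k) * ENNReal.ofReal (σ⁻¹ ^ 3) := by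
    have hcancel : σ⁻¹ ^ k * σ ^ k = 1 := by rw [← mul_pow, inv_mul_cancel₀ hσ.ne', one_pow]
    rw [← ENNReal.ofReal_pow (by positivity), ← ENNReal.ofReal_mul (by positivity),
      ← ENNReal.ofReal_mul (by positivity)]
    congr 1
    linear_combination (B * (K / δ) ^ k * σ⁻¹ ^ 3) * hcancel
  calc ENNReal.ofReal (p * ∏ i, (1 / σ) * f ((x i - μ) / σ))
      ≤ ENNReal.ofReal (B * σ⁻¹ ^ (k + 3) * ∏ i, f ((x i - μ) / σ)) := by
        refine ENNReal.ofReal_le_ofReal ?_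
        have hf_prod : 0 ≤ ∏ i, f ((x i - μ) / σ) := Finset.prod_nonneg fun i _ => hf0 _
        rw [Finset.prod_mul_distrib, Finset.prod_const, Finset.card_univ, hι, one_div]
        calc p * (σ⁻¹ ^ (k + 2) * ∏ i, f ((x i - μ) / σ))
            ≤ B * σ⁻¹ * (σ⁻¹ ^ (k + 2) * ∏ i, f ((x i - μ) / σ)) :=
              mul_le_mul_of_nonneg_right hp' (mul_nonneg (by positivity) hf_prod)
          _ = B * σ⁻¹ ^ (k + 3) * ∏ i, f ((x i - μ) / σ) := by ring
    _ = ENNReal.ofReal (B * σ⁻¹ ^ (k + 3)) * ∏ i, ENNReal.ofReal (f ((x i - μ) / σ)) := by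
        rw [ENNReal.ofReal_mul (by positivity), ENNReal.ofReal_prod_of_nonneg fun i _ => hf0 _]
    _ ≤ ENNReal.ofReal (B * σ⁻¹ ^ (k + 3)) * (ENNReal.ofReal (K / δ * σ) ^ k *
          ∑ q ∈ Finset.univ.offDiag,
            ENNReal.ofReal (f ((x q.1 - μ) / σ)) * ENNReal.ofReal (f ((x q.2 - μ) / σ))) :=
        mul_le_mul_right hprod _
    _ = _ := by rw [← mul_assoc, hscale, mul_assoc, Finset.mul_sum]

theorem statement8_general (n : ℕ) (hn : 2 ≤ n) (x : Fin n → ℝ) (hx : Function.Injective x)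
    (f : ℝ → ℝ) (hf_cont : Continuous f) (hf_pos : ∀ z : ℝ, 0 < f z)
    (hf_int : ∫ z, f z = 1)
    (hf_tail : ∃ M : ℝ, 0 ≤ M ∧ ∀ y z : ℝ, M ≤ |z| → |z| ≤ |y| →
      f y ≤ f z ∧ |y| * f y ≤ |z| * f z)
    (pr : ℝ → ℝ → ℝ)
    (hpr_bdd : ∃ B : ℝ, ∀ μ σ : ℝ, 0 < σ → σ * pr μ σ ≤ B) :
    (∫⁻ σ in Set.Ioi (0 : ℝ), ∫⁻ μ : ℝ,
      ENNReal.ofReal (pr μ σ * ∏ i, (1 / σ) * f ((x i - μ) / σ))) < ⊤ := by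
  obtain ⟨k, rfl⟩ := Nat.exists_eq_add_of_le' hn
  obtain ⟨M, -, hM⟩ := hf_tail
  obtain ⟨K, hK⟩ := (continuous_abs.mul hf_cont).bddAbove_range_of_abs_tail_antitone
    fun y z h₁ h₂ => (hM y z h₁ h₂).2
  obtain ⟨δ, hδ, hsep⟩ := exists_pos_forall_ne_le_dist hx
  obtain ⟨B, hB⟩ := hpr_bdd
  have hfi : Integrable f := .of_integral_ne_zero (by simp [hf_int])
  calc (∫⁻ σ in Ioi 0, ∫⁻ μ, ENNReal.ofReal (pr μ σ * ∏ i, (1 / σ) * f ((x i - μ) / σ)))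
      ≤ ∫⁻ σ in Ioi 0, ∫⁻ μ, ENNReal.ofReal (max B 0 * (K / δ) ^ k) *
          ∑ q ∈ Finset.univ.offDiag, ENNReal.ofReal (σ⁻¹ ^ 3) *
            (ENNReal.ofReal (f ((x q.1 - μ) / σ)) * ENNReal.ofReal (f ((x q.2 - μ) / σ))) := by
        refine setLIntegral_mono' measurableSet_Ioi fun σ hσ => lintegral_mono fun μ => ?_
        obtain ⟨i₀, hi₀⟩ := hsep μ
        exact ofReal_mul_prod_density_le_sum_offDiag (Fintype.card_fin _)
          (fun z => (hf_pos z).le) (fun z => hK ⟨z, rfl⟩) hδ (le_max_right _ _) hσ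
          ((hB μ σ hσ).trans (le_max_left _ _)) i₀ fun j hj => by
            simpa [Real.dist_eq] using hi₀ j hj
    _ = ENNReal.ofReal (max B 0 * (K / δ) ^ k) * ∫⁻ σ in Ioi 0, ∫⁻ μ,
          ∑ q ∈ Finset.univ.offDiag, ENNReal.ofReal (σ⁻¹ ^ 3) *
            (ENNReal.ofReal (f ((x q.1 - μ) / σ)) * ENNReal.ofReal (f ((x q.2 - μ) / σ))) := by
        simp_rw [lintegral_const_mul' _ _ ENNReal.ofReal_ne_top]
    _ < ⊤ := ENNReal.mul_lt_top ENNReal.ofReal_lt_top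
        (setLIntegral_Ioi_lintegral_sum_offDiag_lt_top hf_cont.measurable.ennreal_ofReal
          hfi.lintegral_lt_top.ne hx)

/-- Proposition 5 (Properness of the posterior): in the location–scale model,
with pairwise distinct observations `x₁,…,xₙ` (`n ≥ 2`), the marginal
`m(xₙ) = ∫₀^∞ ∫_ℝ π(μ,σ) ∏ᵢ (1/σ) f((xᵢ−μ)/σ) dμ dσ` is finite, so the
posterior is proper. -/
theorem statement8 (n : ℕ) (hn : 2 ≤ n) (x : Fin n → ℝ) (hx : Function.Injective x)
    (f : ℝ → ℝ) (hf_cont : Continuous f) (hf_pos : ∀ z : ℝ, 0 < f z)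
    (hf_symm : ∀ z : ℝ, f (-z) = f z)
    (hf_int : ∫ z, f z = 1)
    (hf_tail : ∃ M : ℝ, 0 ≤ M ∧ ∀ y z : ℝ, M ≤ |z| → |z| ≤ |y| →
      f y ≤ f z ∧ |y| * f y ≤ |z| * f z)
    (pr : ℝ → ℝ → ℝ) (hpr_nonneg : ∀ μ σ : ℝ, 0 ≤ pr μ σ)
    (hpr_meas : Measurable (Function.uncurry pr))
    (hpr_bdd : ∃ B : ℝ, ∀ μ σ : ℝ, 0 < σ → σ * pr μ σ ≤ B) :
    (∫⁻ σ in Set.Ioi (0 : ℝ), ∫⁻ μ : ℝ,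
      ENNReal.ofReal (pr μ σ * ∏ i, (1 / σ) * f ((x i - μ) / σ))) < ⊤ :=
  statement8_general n hn x hx f hf_cont hf_pos hf_int hf_tail pr hpr_bdd
end

section
/- (Lemma 1.) Let f : ℝ → ℝ be a probability density that is continuous and strictly positive on ℝ, symmetric about the origin, with both tails of f(z) and |z|f(z) monotonic, and such that z f(z) is log-regularly varying at ∞ with index ρ ≥ 1. Then for every λ ≥ 0 and τ ≥ 1 there exists a constant D(λ,τ) ≥ 1 such that for all z ∈ ℝ and all (μ,σ) ∈ [−λ,λ] × [1/τ, τ], one has 1/D(λ,τ) ≤ (1/σ) f((z−μ)/σ)/f(z) ≤ D(λ,τ). -/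
open Real Set

/-!
For `z` large, `y = (z - μ)/σ` lies between `√z` and `z²`, so `y = z ^ ν` with `ν ∈ [1/2, 2]`.
Log-regular variation of `g(z) = z f(z)` (with `ε = 1/2`, `τ = 2`) then bounds `g y / g z`
above and below, and `(1/σ) f(y) / f(z) = (g y / g z) · z / (z - μ)`. Evenness of `f` handles
`z → -∞`, and on the remaining compact range of `(z, μ, σ)` the ratio is continuous and positive.
-/

lemma exists_rpow_eq_of_le_sq {y z : ℝ} (hz : 1 < z) (hy : 0 < y) (hzy : z ≤ y ^ 2)
    (hyz : y ≤ z ^ 2) : ∃ ν ∈ Icc (1 / 2 : ℝ) 2, z ^ ν = y := by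
  have hlogz : 0 < log z := log_pos hz
  have hlog_le : log z ≤ 2 * log y := by
    simpa only [log_pow, Nat.cast_ofNat] using log_le_log (by linarith) hzy
  have hlog_ge : log y ≤ 2 * log z := by
    simpa only [log_pow, Nat.cast_ofNat] using log_le_log hy hyz
  refine ⟨log y / log z, ⟨?_, ?_⟩, ?_⟩
  · rw [le_div_iff₀ hlogz]; linarith
  · rw [div_le_iff₀ hlogz]; linarith
  · rw [rpow_def_of_pos (by linarith), mul_div_cancel₀ _ hlogz.ne', exp_log hy]

lemma rpow_mem_Icc_of_mem_Icc_half_two {ν : ℝ} (hν : ν ∈ Icc (1 / 2 : ℝ) 2) (ρ : ℝ) :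
    ν ^ ρ ∈ Icc ((2 : ℝ) ^ (-|ρ|)) (2 ^ |ρ|) := by
  have hν0 : 0 < ν := by linarith [hν.1]
  have hlog : |log ν| ≤ log 2 := by
    refine abs_le.mpr ⟨?_, log_le_log hν0 hν.2⟩
    have := log_le_log (by norm_num) hν.1
    rwa [one_div, log_inv] at this
  have hexp : |log ν * ρ| ≤ log 2 * |ρ| := by
    rw [abs_mul]; exact mul_le_mul_of_nonneg_right hlog (abs_nonneg ρ)
  rw [rpow_def_of_pos hν0, rpow_def_of_pos two_pos, rpow_def_of_pos two_pos]
  obtain ⟨hlo, hhi⟩ := abs_le.mp hexp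
  exact ⟨exp_le_exp.mpr (by linarith), exp_le_exp.mpr hhi⟩

lemma LogRegVarying.exists_div_mem_Icc {g : ℝ → ℝ} {ρ : ℝ} (hg : LogRegVarying g ρ) :
    ∃ A, 1 < A ∧ ∀ z y, A ≤ z → 0 < y → z ≤ y ^ 2 → y ≤ z ^ 2 →
      g y / g z ∈ Icc (1 / (2 * 2 ^ |ρ|)) (2 * 2 ^ |ρ|) := by
  obtain ⟨A, hA, hA_spec⟩ := hg (1 / 2) one_half_pos 2 one_le_two
  refine ⟨A + 1, by linarith, fun z y hz hy hzy hyz => ?_⟩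
  obtain ⟨ν, hν, rfl⟩ := exists_rpow_eq_of_le_sq (by linarith) hy hzy hyz
  have hclose := abs_lt.mp (hA_spec z (by linarith) ν hν.1 hν.2)
  rw [mul_div_assoc] at hclose
  obtain ⟨hp_lo, hp_hi⟩ := rpow_mem_Icc_of_mem_Icc_half_two hν ρ
  set X := g (z ^ ν) / g z
  set p := ν ^ ρ
  set c : ℝ := 2 ^ |ρ|
  have hc : 0 < c := by positivity
  have hp : 0 < p := rpow_pos_of_pos (by linarith [hν.1]) ρ
  have hcp : 1 ≤ p * c := by
    rwa [rpow_neg two_pos.le, inv_le_iff_one_le_mul₀ hc] at hp_lo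
  have hX : 0 < X := pos_of_mul_pos_right (by linarith) hp.le
  constructor
  · rw [div_le_iff₀ (by positivity)]; nlinarith
  · nlinarith

lemma IsCompact.exists_forall_mem_Icc_one_div {X : Type*} [TopologicalSpace X] {K : Set X}
    (hK : IsCompact K) {F : X → ℝ} (hF : ContinuousOn F K) (hF_pos : ∀ x ∈ K, 0 < F x) :
    ∃ D, 1 ≤ D ∧ ∀ x ∈ K, F x ∈ Icc (1 / D) D := by
  obtain ⟨C, hC⟩ := hK.exists_bound_of_continuousOn hF
  obtain ⟨C', hC'⟩ :=
    hK.exists_bound_of_continuousOn (hF.inv₀ fun x hx => (hF_pos x hx).ne')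
  refine ⟨max 1 (max C C'), le_max_left _ _, fun x hx => ⟨?_, ?_⟩⟩
  · have hinv : (F x)⁻¹ ≤ max 1 (max C C') := by
      have := hC' x hx
      rw [Pi.inv_apply, Real.norm_eq_abs, abs_of_pos (inv_pos.mpr (hF_pos x hx))] at this
      exact this.trans (le_max_of_le_right (le_max_right _ _))
    rw [one_div]
    exact (inv_le_comm₀ (hF_pos x hx) (zero_lt_one.trans_le (le_max_left _ _))).mp hinv
  · exact (le_abs_self _).trans ((hC x hx).trans (le_max_of_le_right (le_max_left _ _)))

lemma Icc_one_div_subset {D D' : ℝ} (hD : 0 < D) (h : D ≤ D') :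
    Icc (1 / D) D ⊆ Icc (1 / D') D' :=
  Icc_subset_Icc (one_div_le_one_div_of_le hD h) h

noncomputable def shiftScaleRatio (f : ℝ → ℝ) (z μ σ : ℝ) : ℝ := 1 / σ * f ((z - μ) / σ) / f z

lemma shiftScaleRatio_neg {f : ℝ → ℝ} (hf : ∀ z, f (-z) = f z) (z μ σ : ℝ) :
    shiftScaleRatio f (-z) (-μ) σ = shiftScaleRatio f z μ σ := by
  rw [shiftScaleRatio, shiftScaleRatio, show (-z - -μ) / σ = -((z - μ) / σ) by ring, hf, hf]

lemma shiftScaleRatio_eq_mul (f : ℝ → ℝ) {z μ σ : ℝ} (hz : z ≠ 0) (hzμ : z - μ ≠ 0)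
    (hσ : σ ≠ 0) :
    shiftScaleRatio f z μ σ =
      (z - μ) / σ * f ((z - μ) / σ) / (z * f z) * (z / (z - μ)) := by
  rw [shiftScaleRatio]
  field_simp

lemma continuousOn_shiftScaleRatio {f : ℝ → ℝ} (hf : Continuous f) (hf0 : ∀ z, f z ≠ 0) :
    ContinuousOn (fun p : ℝ × ℝ × ℝ => shiftScaleRatio f p.1 p.2.1 p.2.2) {p | p.2.2 ≠ 0} := by
  intro p hp
  apply ContinuousAt.continuousWithinAt
  unfold shiftScaleRatio
  have hp : p.2.2 ≠ 0 := hp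
  fun_prop (disch := first | exact hp | exact hf0 _)

lemma shiftScaleRatio_pos {f : ℝ → ℝ} (hf : ∀ z, 0 < f z) (z μ : ℝ) {σ : ℝ} (hσ : 0 < σ) :
    0 < shiftScaleRatio f z μ σ := by
  have := hf z
  have := hf ((z - μ) / σ)
  unfold shiftScaleRatio
  positivity

lemma exists_shiftScaleRatio_mem_Icc_of_le {f : ℝ → ℝ} {ρ : ℝ}
    (hf : LogRegVarying (fun z => z * f z) ρ) (lam : ℝ) {τ : ℝ} (hτ : 0 < τ) :
    ∃ Z₀ C, 0 < C ∧ ∀ z μ σ, Z₀ ≤ z → |μ| ≤ lam → 1 / τ ≤ σ → σ ≤ τ →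
      shiftScaleRatio f z μ σ ∈ Icc (1 / C) C := by
  obtain ⟨A, hA, hA_spec⟩ := hf.exists_div_mem_Icc
  set c : ℝ := 2 * 2 ^ |ρ|
  have hc : 0 < c := by positivity
  refine ⟨A + 2 * |lam| + 4 * τ ^ 2 + 2 * τ, 2 * c, by positivity,
    fun z μ σ hz hμ hσ_lo hσ_hi => ?_⟩
  have hσ : 0 < σ := (one_div_pos.mpr hτ).trans_le hσ_lo
  have hστ : 1 ≤ σ * τ := by rwa [div_le_iff₀ hτ] at hσ_lo
  have hμz : 2 * |μ| ≤ z := by linarith [le_abs_self lam, sq_nonneg τ]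
  have hz_large : 4 * τ ^ 2 + 2 * τ + 1 ≤ z := by linarith [abs_nonneg lam]
  have hμ_lo := neg_abs_le μ
  have hμ_hi := le_abs_self μ
  have hzμ : 0 < z - μ := by nlinarith
  set y := (z - μ) / σ with hy_def
  have hy : 0 < y := div_pos hzμ hσ
  have hy_lo : z ≤ 2 * τ * y := by
    rw [hy_def, ← mul_div_assoc, le_div_iff₀ hσ]; nlinarith
  have hy_hi : y ≤ 2 * τ * z := by
    rw [hy_def, div_le_iff₀ hσ]; nlinarith
  have hratio :=
    hA_spec z y (by linarith [abs_nonneg lam, sq_nonneg τ]) hy (by nlinarith) (by nlinarith)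
  have hw : z / (z - μ) ∈ Icc (1 / 2 : ℝ) 2 := by
    constructor
    · rw [le_div_iff₀ hzμ]; linarith
    · rw [div_le_iff₀ hzμ]; linarith
  rw [shiftScaleRatio_eq_mul f (by linarith) hzμ.ne' hσ.ne']
  constructor
  · calc 1 / (2 * c) = 1 / c * (1 / 2) := by ring
      _ ≤ _ := mul_le_mul hratio.1 hw.1 (by norm_num) (hratio.1.trans' (by positivity))
  · calc _ ≤ c * 2 := mul_le_mul hratio.2 hw.2 (by linarith [hw.1]) hc.le
      _ = 2 * c := by ring

theorem statement9_general (f : ℝ → ℝ) (hf_cont : Continuous f) (hf_pos : ∀ z : ℝ, 0 < f z)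
    (hf_symm : ∀ z : ℝ, f (-z) = f z)
    (ρ : ℝ) (hLRV : LogRegVarying (fun z => z * f z) ρ) :
    ∀ lam : ℝ, 0 ≤ lam → ∀ τ : ℝ, 1 ≤ τ →
      ∃ D : ℝ, 1 ≤ D ∧ ∀ z : ℝ, ∀ μ σ : ℝ, |μ| ≤ lam → 1 / τ ≤ σ → σ ≤ τ →
        1 / D ≤ (1 / σ) * f ((z - μ) / σ) / f z ∧
        (1 / σ) * f ((z - μ) / σ) / f z ≤ D := by
  intro lam _ τ hτ
  have hτ0 : 0 < τ := zero_lt_one.trans_le hτ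
  obtain ⟨Z₀, C, hC, htail⟩ := exists_shiftScaleRatio_mem_Icc_of_le hLRV lam hτ0
  set K : Set (ℝ × ℝ × ℝ) := Icc (-Z₀) Z₀ ×ˢ Icc (-lam) lam ×ˢ Icc (1 / τ) τ
  have hK_σ : ∀ p ∈ K, 0 < p.2.2 := fun p hp => (one_div_pos.mpr hτ0).trans_le hp.2.2.1
  have hK : IsCompact K := isCompact_Icc.prod (isCompact_Icc.prod isCompact_Icc)
  obtain ⟨D, hD, hcompact⟩ := hK.exists_forall_mem_Icc_one_div
      ((continuousOn_shiftScaleRatio hf_cont fun z => (hf_pos z).ne').mono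
        fun p hp => (hK_σ p hp).ne')
      fun p hp => shiftScaleRatio_pos hf_pos _ _ (hK_σ p hp)
  refine ⟨max C D, le_max_of_le_right hD, fun z μ σ hμ hσ_lo hσ_hi => ?_⟩
  show shiftScaleRatio f z μ σ ∈ Icc (1 / max C D) (max C D)
  rcases le_or_gt |z| Z₀ with hz | hz
  · exact Icc_one_div_subset (by linarith) (le_max_right _ _)
      (hcompact (z, μ, σ) ⟨abs_le.mp hz, abs_le.mp hμ, hσ_lo, hσ_hi⟩)
  apply Icc_one_div_subset hC (le_max_left _ _)
  rcases lt_abs.mp hz with hz | hz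
  · exact htail z μ σ hz.le hμ hσ_lo hσ_hi
  · rw [← shiftScaleRatio_neg hf_symm]
    exact htail (-z) (-μ) σ hz.le (by rwa [abs_neg]) hσ_lo hσ_hi

/-- Lemma 1: for every `λ ≥ 0`, `τ ≥ 1` there is `D(λ,τ) ≥ 1` with
`1/D ≤ (1/σ) f((z−μ)/σ)/f(z) ≤ D` for all `z ∈ ℝ` and
`(μ,σ) ∈ [−λ,λ] × [1/τ, τ]`. -/
theorem statement9 (f : ℝ → ℝ) (hf_cont : Continuous f) (hf_pos : ∀ z : ℝ, 0 < f z)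
    (hf_symm : ∀ z : ℝ, f (-z) = f z)
    (hf_int : ∫ z, f z = 1)
    (M : ℝ) (hM : 0 ≤ M)
    (hf_tail : ∀ y z : ℝ, M ≤ |z| → |z| ≤ |y| → f y ≤ f z ∧ |y| * f y ≤ |z| * f z)
    (ρ : ℝ) (hρ : 1 ≤ ρ) (hLRV : LogRegVarying (fun z => z * f z) ρ) :
    ∀ lam : ℝ, 0 ≤ lam → ∀ τ : ℝ, 1 ≤ τ →
      ∃ D : ℝ, 1 ≤ D ∧ ∀ z : ℝ, ∀ μ σ : ℝ, |μ| ≤ lam → 1 / τ ≤ σ → σ ≤ τ →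
        1 / D ≤ (1 / σ) * f ((z - μ) / σ) / f z ∧
        (1 / σ) * f ((z - μ) / σ) / f z ≤ D :=
  statement9_general f hf_cont hf_pos hf_symm ρ hLRV
end

section
/- (Lemma 2.) Let f : ℝ → ℝ be a probability density that is continuous and strictly positive on ℝ, symmetric about the origin, with both tails of f(z) and |z|f(z) monotonic with monotonicity constant M ≥ 0, and such that z f(z) is log-regularly varying at ∞ with index ρ ≥ 1. Then there exists a constant C > 0 such that for all z with |z| ≥ 2M, sup_{μ ∈ ℝ} f(μ) f(z−μ)/f(z) ≤ C. -/
/-!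
If `|μ| ≥ |z|/2`, tail monotonicity bounds `f μ` by `f (|z|/2)` while `f (z - μ) ≤ sup f`;
otherwise `|z - μ| ≥ |z|/2` and the roles swap. So it suffices that `f (x) ≤ K f (2x)` for
all `x ≥ 0`. For large `x` this is log-regular variation of `x f(x)` applied with
`ν = log (2x) / log x ∈ [1, 2]`, for which `x ^ ν = 2x`; on the remaining compact range it
follows from continuity and positivity of `f`.
-/

open Real Set

open Filter

lemma exists_rpow_eq_two_mul {x : ℝ} (hx : 2 ≤ x) : ∃ ν ∈ Icc (1 : ℝ) 2, x ^ ν = 2 * x := by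
  have hlog_pos : 0 < log x := log_pos (by linarith)
  have hlog_two_mul : log (2 * x) = log 2 + log x := log_mul two_ne_zero (by linarith)
  have hlog_two_le : log 2 ≤ log x := log_le_log two_pos hx
  refine ⟨log (2 * x) / log x, ⟨?_, ?_⟩, ?_⟩
  · rw [le_div_iff₀ hlog_pos, hlog_two_mul]
    linarith [log_pos one_lt_two]
  · rw [div_le_iff₀ hlog_pos, hlog_two_mul]
    linarith
  · rw [rpow_def_of_pos (by linarith), mul_div_cancel₀ _ hlog_pos.ne', exp_log (by linarith)]

lemma rpow_le_two_rpow_abs {ν : ℝ} (h1 : 1 ≤ ν) (h2 : ν ≤ 2) (ρ : ℝ) : ν ^ ρ ≤ 2 ^ |ρ| :=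
  calc ν ^ ρ ≤ ν ^ |ρ| := rpow_le_rpow_of_exponent_le h1 (le_abs_self ρ)
    _ ≤ 2 ^ |ρ| := rpow_le_rpow (by linarith) h2 (abs_nonneg ρ)

lemma LogRegVarying.eventually_le_mul_comp_two_mul {g : ℝ → ℝ} {ρ : ℝ}
    (hg : LogRegVarying g ρ) (hg_pos : ∀ᶠ x in atTop, 0 < g x) :
    ∀ᶠ x in atTop, g x ≤ 2 * 2 ^ |ρ| * g (2 * x) := by
  obtain ⟨A, -, hA⟩ := hg (1 / 2) one_half_pos 2 one_le_two
  filter_upwards [hg_pos, eventually_ge_atTop A, eventually_ge_atTop 2] with x hgx hAx h2x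
  obtain ⟨ν, ⟨hν1, hν2⟩, hxν⟩ := exists_rpow_eq_two_mul h2x
  have hclose := hA x hAx ν (by linarith) hν2
  rw [hxν] at hclose
  have hratio : g x < 2 * (ν ^ ρ * g (2 * x)) := by
    have := (abs_lt.mp hclose).1
    rw [lt_sub_iff_add_lt, lt_div_iff₀ hgx] at this
    linarith
  have hν_pos : 0 < ν ^ ρ := rpow_pos_of_pos (by linarith) ρ
  have hg2x : 0 < g (2 * x) := pos_of_mul_pos_right (by linarith) hν_pos.le
  nlinarith [rpow_le_two_rpow_abs hν1 hν2 ρ]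

lemma bddAbove_image_Ici_of_eventually_le {h : ℝ → ℝ} (hh : Continuous h) {c : ℝ}
    (hc : ∀ᶠ x in atTop, h x ≤ c) (a : ℝ) : BddAbove (h '' Ici a) := by
  obtain ⟨A, hA⟩ := eventually_atTop.mp hc
  have hcover : Ici a ⊆ Icc a A ∪ Ici A := fun x hx => by
    rcases le_total x A with hxA | hxA
    · exact Or.inl ⟨hx, hxA⟩
    · exact Or.inr hxA
  have hcompact : BddAbove (h '' Icc a A) := isCompact_Icc.bddAbove_image hh.continuousOn
  have htail : BddAbove (h '' Ici A) := ⟨c, by rintro _ ⟨x, hx, rfl⟩; exact hA x hx⟩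
  refine (hcompact.union htail).mono ?_
  rw [← image_union]
  exact image_mono hcover

lemma exists_forall_le_mul_comp_two_mul {f : ℝ → ℝ} (hf_cont : Continuous f)
    (hf_pos : ∀ x, 0 < f x) {c : ℝ} (hc : ∀ᶠ x in atTop, f x ≤ c * f (2 * x)) :
    ∃ K, ∀ x, 0 ≤ x → f x ≤ K * f (2 * x) := by
  have hratio_cont : Continuous fun x => f x / f (2 * x) :=
    hf_cont.div (hf_cont.comp (continuous_const.mul continuous_id)) fun x => (hf_pos _).ne'
  have hratio_le : ∀ᶠ x in atTop, f x / f (2 * x) ≤ c := by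
    filter_upwards [hc] with x hx
    rwa [div_le_iff₀ (hf_pos _)]
  obtain ⟨K, hK⟩ := bddAbove_image_Ici_of_eventually_le hratio_cont hratio_le 0
  refine ⟨K, fun x hx => ?_⟩
  rw [← div_le_iff₀ (hf_pos _)]
  exact hK ⟨x, hx, rfl⟩

lemma exists_forall_le_of_tail {f : ℝ → ℝ} (hf_cont : Continuous f) {M : ℝ}
    (hf_tail : ∀ y z : ℝ, M ≤ |z| → |z| ≤ |y| → f y ≤ f z) : ∃ B, ∀ y, f y ≤ B := by
  obtain ⟨B, hB⟩ := (isCompact_Icc (a := -|M|) (b := |M|)).bddAbove_image hf_cont.continuousOn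
  refine ⟨B, fun y => ?_⟩
  rcases le_or_gt |y| |M| with hy | hy
  · exact hB ⟨y, abs_le.mp hy, rfl⟩
  · have hM_abs : |(|M|)| = |M| := abs_abs M
    calc f y ≤ f |M| :=
          hf_tail y |M| (by rw [hM_abs]; exact le_abs_self M) (by rw [hM_abs]; exact hy.le)
      _ ≤ B := hB ⟨|M|, ⟨by linarith [abs_nonneg M], le_rfl⟩, rfl⟩

lemma min_le_half_of_tail {f : ℝ → ℝ} {M : ℝ}
    (hf_tail : ∀ y z : ℝ, M ≤ |z| → |z| ≤ |y| → f y ≤ f z) {z : ℝ} (hz : 2 * M ≤ |z|) (μ : ℝ) :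
    min (f μ) (f (z - μ)) ≤ f (|z| / 2) := by
  have hhalf : |(|z| / 2)| = |z| / 2 := abs_of_nonneg (by positivity)
  have htri : |z| ≤ |μ| + |z - μ| := by
    simpa using abs_add_le μ (z - μ)
  rcases le_total (|z| / 2) |μ| with hμ | hμ
  · exact min_le_of_left_le (hf_tail μ _ (by rw [hhalf]; linarith) (by rwa [hhalf]))
  · exact min_le_of_right_le
      (hf_tail (z - μ) _ (by rw [hhalf]; linarith) (by rw [hhalf]; linarith))

theorem statement10_general (f : ℝ → ℝ) (hf_cont : Continuous f) (hf_pos : ∀ z : ℝ, 0 < f z)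
    (hf_symm : ∀ z : ℝ, f (-z) = f z)
    (M : ℝ)
    (hf_tail : ∀ y z : ℝ, M ≤ |z| → |z| ≤ |y| → f y ≤ f z ∧ |y| * f y ≤ |z| * f z)
    (ρ : ℝ) (hLRV : LogRegVarying (fun z => z * f z) ρ) :
    ∃ C : ℝ, 0 < C ∧ ∀ z : ℝ, 2 * M ≤ |z| → ∀ μ : ℝ,
      f μ * f (z - μ) / f z ≤ C := by
  have hf_tail' : ∀ y z : ℝ, M ≤ |z| → |z| ≤ |y| → f y ≤ f z := fun y z h1 h2 =>
    (hf_tail y z h1 h2).1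
  have hg_doubling := hLRV.eventually_le_mul_comp_two_mul <| by
    filter_upwards [eventually_gt_atTop 0] with x hx using mul_pos hx (hf_pos x)
  have hf_doubling : ∀ᶠ x in atTop, f x ≤ 4 * 2 ^ |ρ| * f (2 * x) := by
    filter_upwards [hg_doubling, eventually_gt_atTop 0] with x hx hx_pos
    nlinarith [hf_pos x, hf_pos (2 * x)]
  obtain ⟨K, hK⟩ := exists_forall_le_mul_comp_two_mul hf_cont hf_pos hf_doubling
  obtain ⟨B, hB⟩ := exists_forall_le_of_tail hf_cont hf_tail'
  have hK_pos : 0 < K := by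
    have hK0 := hK 0 le_rfl
    rw [mul_zero] at hK0
    exact pos_of_mul_pos_left ((hf_pos 0).trans_le hK0) (hf_pos 0).le
  have hB_pos : 0 < B := (hf_pos 0).trans_le (hB 0)
  refine ⟨B * K, mul_pos hB_pos hK_pos, fun z hz μ => ?_⟩
  have hfz : f z = f |z| := by
    rcases abs_choice z with h | h <;> rw [h]; rw [hf_symm]
  have hhalf : f (|z| / 2) ≤ K * f z := by
    simpa [hfz, mul_div_cancel₀] using hK (|z| / 2) (by positivity)
  rw [div_le_iff₀ (hf_pos z), ← min_mul_max]
  calc min (f μ) (f (z - μ)) * max (f μ) (f (z - μ)) ≤ (K * f z) * B :=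
        mul_le_mul ((min_le_half_of_tail hf_tail' hz μ).trans hhalf) (max_le (hB _) (hB _))
          (le_max_of_le_left (hf_pos μ).le) (mul_pos hK_pos (hf_pos z)).le
    _ = B * K * f z := by ring

/-- Lemma 2: there is `C > 0` such that `|z| ≥ 2M` implies
`f(μ) f(z−μ)/f(z) ≤ C` for every `μ ∈ ℝ`. -/
theorem statement10 (f : ℝ → ℝ) (hf_cont : Continuous f) (hf_pos : ∀ z : ℝ, 0 < f z)
    (hf_symm : ∀ z : ℝ, f (-z) = f z)
    (hf_int : ∫ z, f z = 1)
    (M : ℝ) (hM : 0 ≤ M)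
    (hf_tail : ∀ y z : ℝ, M ≤ |z| → |z| ≤ |y| → f y ≤ f z ∧ |y| * f y ≤ |z| * f z)
    (ρ : ℝ) (hρ : 1 ≤ ρ) (hLRV : LogRegVarying (fun z => z * f z) ρ) :
    ∃ C : ℝ, 0 < C ∧ ∀ z : ℝ, 2 * M ≤ |z| → ∀ μ : ℝ,
      f μ * f (z - μ) / f z ≤ C :=
  statement10_general f hf_cont hf_pos hf_symm M hf_tail ρ hLRV
end

section
/- (Normalization of the log-Pareto-tailed symmetric density.) The log-Pareto-tailed symmetric density integrates to one: with α > 1, β > 1, g a density symmetric about the origin, continuous and strictly positive on [−α,α], G(α) = ∫_{−∞}^{α} g(u) du and K = (β−1)/((2G(α)−1)(β−1) + 2 g(α) α log α), one has ∫_ℝ K·( g(z)·1_{[−α,α]}(z) + g(α)·(α/|z|)·(log α / log|z|)^β · 1_{(α,∞)}(|z|) ) dz = 1. -/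
open Real Set MeasureTheory

/-! The tail `g(α) (α/z) (log α / log z)^β` has the explicit primitive
`-g(α) α (log α)^β (log z)^(1-β) / (β-1)`, so each of the two tails contributes
`g(α) α log α / (β-1)`; by symmetry of `g` the central part contributes
`∫_{-α}^{α} g = 2G(α) - 1`, and `K` is exactly the reciprocal of the sum. -/

section EvenFunction

variable {h : ℝ → ℝ} {a : ℝ}

theorem indicator_lt_abs_of_even (heven : ∀ x, h (-x) = h x) (ha : 0 ≤ a) (z : ℝ) :
    {w | a < |w|}.indicator h z = (Ioi a).indicator h z + (Ioi a).indicator h (-z) := by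
  simp only [indicator_apply, mem_ofPred_eq, mem_Ioi, lt_abs, heven]
  split_ifs <;> first | (exfalso; linarith) | simp_all

theorem integrable_indicator_lt_abs_of_even (heven : ∀ x, h (-x) = h x) (ha : 0 ≤ a)
    (hint : IntegrableOn h (Ioi a)) : Integrable ({w | a < |w|}.indicator h) := by
  have hint' := hint.integrable_indicator measurableSet_Ioi
  rw [funext (indicator_lt_abs_of_even heven ha)]
  exact hint'.add hint'.comp_neg

theorem integral_indicator_lt_abs_of_even (heven : ∀ x, h (-x) = h x) (ha : 0 ≤ a)
    (hint : IntegrableOn h (Ioi a)) :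
    ∫ x, {w | a < |w|}.indicator h x = 2 * ∫ x in Ioi a, h x := by
  have hint' := hint.integrable_indicator measurableSet_Ioi
  simp only [indicator_lt_abs_of_even heven ha]
  rw [integral_add hint' hint'.comp_neg, integral_neg_eq_self, integral_indicator measurableSet_Ioi]
  ring

theorem setIntegral_Icc_neg_of_even (heven : ∀ x, h (-x) = h x) (ha : 0 ≤ a)
    (hint : Integrable h) :
    ∫ x in Icc (-a) a, h x = 2 * (∫ x in Iic a, h x) - ∫ x, h x := by
  have hcompl : (Icc (-a) a)ᶜ = {w | a < |w|} := by
    ext w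
    simp [← abs_le]
  have hcenter := integral_add_compl (measurableSet_Icc (a := -a) (b := a)) hint
  have hleft := integral_add_compl (measurableSet_Iic (a := a)) hint
  rw [hcompl, ← integral_indicator (measurableSet_lt measurable_const measurable_abs),
    integral_indicator_lt_abs_of_even heven ha hint.integrableOn] at hcenter
  rw [compl_Iic] at hleft
  linarith

end EvenFunction

section LogParetoTail

theorem hasDerivAt_log_rpow_div {β x : ℝ} (hβ : β ≠ 1) (hx : 1 < x) :
    HasDerivAt (fun y => log y ^ (1 - β) / (1 - β)) (x⁻¹ * log x ^ (-β)) x := by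
  have hlog : HasDerivAt log x⁻¹ x := hasDerivAt_log (by linarith)
  have hpow := hlog.rpow_const (p := 1 - β) (Or.inl (log_pos hx).ne')
  refine (hpow.div_const (1 - β)).congr_deriv ?_
  have : (1 : ℝ) - β ≠ 0 := sub_ne_zero.mpr hβ.symm
  rw [show 1 - β - 1 = -β by ring]
  field_simp

variable {a β : ℝ}

theorem tendsto_log_rpow_div_atTop (hβ : 1 < β) :
    Filter.Tendsto (fun y => log y ^ (1 - β) / (1 - β)) Filter.atTop (nhds 0) := by
  have hpow : Filter.Tendsto (fun x : ℝ => x ^ (1 - β)) Filter.atTop (nhds 0) := by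
    simpa [neg_sub] using tendsto_rpow_neg_atTop (by linarith : (0 : ℝ) < β - 1)
  simpa using (hpow.comp tendsto_log_atTop).div_const (1 - β)

theorem continuousWithinAt_log_rpow_div (ha : 1 < a) :
    ContinuousWithinAt (fun y => log y ^ (1 - β) / (1 - β)) (Ici a) a :=
  (((continuousAt_log (by linarith)).rpow_const (Or.inl (log_pos ha).ne')).div_const _)
    |>.continuousWithinAt

theorem inv_mul_log_rpow_neg_nonneg {x : ℝ} (hx : 1 < x) : 0 ≤ x⁻¹ * log x ^ (-β) := by
  have := log_pos hx
  positivity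

theorem integrableOn_Ioi_inv_mul_log_rpow_neg (ha : 1 < a) (hβ : 1 < β) :
    IntegrableOn (fun x => x⁻¹ * log x ^ (-β)) (Ioi a) :=
  integrableOn_Ioi_deriv_of_nonneg (continuousWithinAt_log_rpow_div ha)
    (fun _ hx => hasDerivAt_log_rpow_div hβ.ne' (ha.trans hx))
    (fun _ hx => inv_mul_log_rpow_neg_nonneg (ha.trans hx)) (tendsto_log_rpow_div_atTop hβ)

theorem integral_Ioi_inv_mul_log_rpow_neg (ha : 1 < a) (hβ : 1 < β) :
    ∫ x in Ioi a, x⁻¹ * log x ^ (-β) = log a ^ (1 - β) / (β - 1) := by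
  rw [integral_Ioi_of_hasDerivAt_of_nonneg (continuousWithinAt_log_rpow_div ha)
    (fun _ hx => hasDerivAt_log_rpow_div hβ.ne' (ha.trans hx))
    (fun _ hx => inv_mul_log_rpow_neg_nonneg (ha.trans hx)) (tendsto_log_rpow_div_atTop hβ),
    zero_sub, ← div_neg, neg_sub]

noncomputable def logParetoTail (c a β w : ℝ) : ℝ := c * (a / |w|) * (log a / log |w|) ^ β

theorem logParetoTail_neg (c a β w : ℝ) :
    logParetoTail c a β (-w) = logParetoTail c a β w := by
  simp only [logParetoTail, abs_neg]

theorem logParetoTail_eq (c : ℝ) (ha : 1 < a) {x : ℝ} (hx : a < x) :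
    logParetoTail c a β x = c * a * log a ^ β * (x⁻¹ * log x ^ (-β)) := by
  have hloga := log_pos ha
  have hlogx := log_pos (ha.trans hx)
  rw [logParetoTail, abs_of_pos (by linarith), div_rpow hloga.le hlogx.le, rpow_neg hlogx.le]
  ring

theorem integrableOn_Ioi_logParetoTail (c : ℝ) (ha : 1 < a) (hβ : 1 < β) :
    IntegrableOn (logParetoTail c a β) (Ioi a) :=
  IntegrableOn.congr_fun
    ((integrableOn_Ioi_inv_mul_log_rpow_neg ha hβ).const_mul (c * a * log a ^ β))
    (fun _ hx => (logParetoTail_eq c ha hx).symm) measurableSet_Ioi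

theorem integral_Ioi_logParetoTail (c : ℝ) (ha : 1 < a) (hβ : 1 < β) :
    ∫ x in Ioi a, logParetoTail c a β x = c * a * log a / (β - 1) := by
  rw [setIntegral_congr_fun measurableSet_Ioi (fun _ hx => logParetoTail_eq c ha hx),
    integral_const_mul, integral_Ioi_inv_mul_log_rpow_neg ha hβ]
  have hpow : log a ^ β * log a ^ (1 - β) = log a := by
    rw [← rpow_add (log_pos ha)]
    norm_num
  rw [mul_div_assoc', mul_assoc _ (log a ^ β), hpow]

end LogParetoTail

theorem statement16_general (α β : ℝ) (hα : 1 < α) (hβ : 1 < β)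
    (g : ℝ → ℝ)
    (hg_int : ∫ z, g z = 1) (hg_symm : ∀ z : ℝ, g (-z) = g z)
    (hg_pos : ∀ z ∈ Set.Icc (-α) α, 0 < g z) :
    ∫ z : ℝ,
      ((β - 1) / ((2 * (∫ u in Set.Iic α, g u) - 1) * (β - 1) + 2 * g α * α * Real.log α)) *
        (Set.indicator (Set.Icc (-α) α) g z +
          Set.indicator {w : ℝ | α < |w|}
            (fun w => g α * (α / |w|) * (Real.log α / Real.log |w|) ^ β) z) = 1 := by
  have hg : Integrable g := .of_integral_ne_zero (by simp [hg_int])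
  have hα0 : 0 ≤ α := by linarith
  have hcenter : ∫ z in Icc (-α) α, g z = 2 * (∫ u in Iic α, g u) - 1 := by
    rw [setIntegral_Icc_neg_of_even hg_symm hα0 hg, hg_int]
  have htail_int := integrableOn_Ioi_logParetoTail (g α) hα hβ
  have hβ1 : 0 < β - 1 := by linarith
  have hden : 0 < (2 * (∫ u in Iic α, g u) - 1) * (β - 1) + 2 * g α * α * log α := by
    have hcenter_nonneg : 0 ≤ ∫ z in Icc (-α) α, g z :=
      setIntegral_nonneg measurableSet_Icc fun z hz => (hg_pos z hz).le
    have hgα : 0 < g α := hg_pos α ⟨by linarith, le_rfl⟩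
    have := log_pos hα
    rw [← hcenter]
    positivity
  change ∫ z, _ * (_ + {w | α < |w|}.indicator (logParetoTail (g α) α β) z) = 1
  rw [integral_const_mul, integral_add (hg.indicator measurableSet_Icc)
      (integrable_indicator_lt_abs_of_even (logParetoTail_neg _ _ _) hα0 htail_int),
    integral_indicator measurableSet_Icc, hcenter,
    integral_indicator_lt_abs_of_even (logParetoTail_neg _ _ _) hα0 htail_int,
    integral_Ioi_logParetoTail _ hα hβ, div_mul_eq_mul_div, div_eq_one_iff_eq hden.ne']
  field_simp

/-- Normalization of the log-Pareto-tailed symmetric density: with `α > 1`,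
`β > 1`, `g` a symmetric density continuous and strictly positive on `[−α,α]`,
`G(α) = ∫_{−∞}^α g` and
`K = (β−1)/((2G(α)−1)(β−1) + 2 g(α) α log α)`, the density
`f(z) = K (g(z) 1_{[−α,α]}(z) + g(α) (α/|z|) (log α/log|z|)^β 1_{(α,∞)}(|z|))`
integrates to one. -/
theorem statement16 (α β : ℝ) (hα : 1 < α) (hβ : 1 < β)
    (g : ℝ → ℝ) (hg_meas : Measurable g) (hg_nonneg : ∀ z : ℝ, 0 ≤ g z)
    (hg_int : ∫ z, g z = 1) (hg_symm : ∀ z : ℝ, g (-z) = g z)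
    (hg_cont : ContinuousOn g (Set.Icc (-α) α))
    (hg_pos : ∀ z ∈ Set.Icc (-α) α, 0 < g z) :
    ∫ z : ℝ,
      ((β - 1) / ((2 * (∫ u in Set.Iic α, g u) - 1) * (β - 1) + 2 * g α * α * Real.log α)) *
        (Set.indicator (Set.Icc (-α) α) g z +
          Set.indicator {w : ℝ | α < |w|}
            (fun w => g α * (α / |w|) * (Real.log α / Real.log |w|) ^ β) z) = 1 :=
  statement16_general α β hα hβ g hg_int hg_symm hg_pos
end
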